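/- arXiv:0905.3241 — 6 statements merged into one kernel-verified Lean document; each statement's English description precedes it below -/
import Mathlib

section
/- Let m ≥ 1 and let f : [0,1]^m → ℝ be Lebesgue integrable. Suppose that ∫_{A₁×⋯×A_m} f dλ^m = 0 for all m-tuples A₁,…,A_m of pairwise disjoint Lebesgue-measurable subsets of [0,1] with λ(A₁) = ⋯ = λ(A_m). Then f = 0 almost everywhere on [0,1]^m. -/
open MeasureTheory Set Function Filter Topology
open scoped ENNReal

/-!
The box integrals `Φ(B) = ∫_{B₁ × ⋯ × B_m} f` are absolutely continuous in the box, so `Φ(B) = 0`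
as soon as `B` can be exhausted, up to sets of arbitrarily small measure, by disjoint boxes on which
`Φ` vanishes. If the `Bᵢ` are pairwise disjoint, cut each of them into pieces of one common measure
`t` (Lebesgue measure has no atoms), with remainders of measure `< t`: products of pieces are
admissible boxes. For arbitrary `Bᵢ`, cut `ℝ` into cells of length `≤ t`: the products of the sets
`Bᵢ ∩ cell_{τ i}` with distinct cells have pairwise disjoint sides, and those with a repeated cell
lie in a neighbourhood of the diagonals of measure `O(t)`. So `Φ` vanishes on all boxes, hence, by a
π-λ argument, on all measurable sets, and `f = 0` almost everywhere.
-/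

theorem Real.exists_subset_volume_eq {S : Set ℝ} {a b : ℝ} (hS : MeasurableSet S)
    (hSab : S ⊆ Icc a b) {r : ℝ≥0∞} (hr : r ≤ volume S) :
    ∃ T ⊆ S, MeasurableSet T ∧ volume T = r := by
  have hS_fin : volume S ≠ ∞ := measure_ne_top_of_subset hSab (by simp)
  set g : ℝ → ℝ := fun u => volume.real (S ∩ Iic u)
  have hg_le : ∀ x y, g x ≤ g y + dist x y := by
    intro x y
    have hsub : S ∩ Iic x ⊆ (S ∩ Iic y) ∪ Ioc y x := fun z ⟨hzS, hzx⟩ =>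
      (le_or_gt z y).imp (fun hzy => ⟨hzS, hzy⟩) fun hyz => ⟨hyz, hzx⟩
    calc g x ≤ volume.real ((S ∩ Iic y) ∪ Ioc y x) :=
          measureReal_mono hsub (measure_union_ne_top (measure_ne_top_of_subset
            inter_subset_left hS_fin) (by simp))
      _ ≤ g y + volume.real (Ioc y x) := measureReal_union_le _ _
      _ ≤ g y + dist x y := by
          rw [Real.volume_real_Ioc, Real.dist_eq]
          gcongr
          exact max_le (le_abs_self _) (abs_nonneg _)
  have hga : g a = 0 := by
    refine le_antisymm ?_ measureReal_nonneg
    calc g a ≤ volume.real (Icc a a) :=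
          measureReal_mono (fun z ⟨hzS, hza⟩ => ⟨(hSab hzS).1, hza⟩) (by simp)
      _ = 0 := by simp [Measure.real]
  have hgb : g b = volume.real S := by
    show volume.real (S ∩ Iic b) = _
    rw [inter_eq_left.2 (show S ⊆ Iic b from fun z hz => (hSab hz).2)]
  obtain ⟨u, hu⟩ := intermediate_value_univ a b (LipschitzWith.of_le_add hg_le).continuous
    (show r.toReal ∈ Icc (g a) (g b) from
      ⟨hga ▸ ENNReal.toReal_nonneg, hgb ▸ ENNReal.toReal_mono hS_fin hr⟩)
  refine ⟨S ∩ Iic u, inter_subset_left, hS.inter measurableSet_Iic, ?_⟩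
  rwa [← ENNReal.toReal_eq_toReal_iff' (measure_ne_top_of_subset inter_subset_left hS_fin)
    (ne_top_of_le_ne_top hS_fin hr)]

theorem Real.exists_finite_pairwiseDisjoint_volume_eq {S : Set ℝ} {a b : ℝ}
    (hS : MeasurableSet S) (hSab : S ⊆ Icc a b) {t : ℝ≥0∞} (ht : t ≠ 0) :
    ∃ P : Set (Set ℝ), P.Finite ∧ P.PairwiseDisjoint id ∧
      (∀ p ∈ P, p ⊆ S ∧ MeasurableSet p ∧ volume p = t) ∧ volume (S \ ⋃₀ P) < t := by
  obtain ⟨N, hN⟩ := ENNReal.exists_nat_mul_gt ht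
    (measure_ne_top_of_subset (μ := volume) hSab (by simp))
  induction N generalizing S with
  | zero => simp at hN
  | succ N ih =>
    rcases lt_or_ge (volume S) t with hSt | htS
    · exact ⟨∅, finite_empty, pairwiseDisjoint_empty, by simp, by simpa using hSt⟩
    have hS_fin : volume S ≠ ∞ := measure_ne_top_of_subset hSab (by simp)
    obtain ⟨T, hTS, hT, hTt⟩ := Real.exists_subset_volume_eq hS hSab htS
    have hST : volume (S \ T) < N * t := by
      rw [measure_sdiff hTS hT.nullMeasurableSet (measure_ne_top_of_subset hTS hS_fin), hTt]
      exact ENNReal.sub_lt_of_lt_add htS (by rwa [Nat.cast_succ, add_one_mul] at hN)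
    obtain ⟨P, hP, hPd, hPS, hPt⟩ := ih (hS.diff hT) (sdiff_subset.trans hSab) hST
    refine ⟨insert T P, hP.insert T, ?_, ?_, ?_⟩
    · exact hPd.insert fun p hp _ => disjoint_sdiff_right.mono_right (hPS p hp).1
    · rintro p (rfl | hp)
      · exact ⟨hTS, hT, hTt⟩
      · exact ⟨(hPS p hp).1.trans sdiff_subset, (hPS p hp).2⟩
    · rwa [sUnion_insert, ← sdiff_sdiff]

section Approximation

variable {X E : Type*} [MeasurableSpace X] [NormedAddCommGroup E] [NormedSpace ℝ E]
  {μ : Measure X} {f : X → E}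

theorem setIntegral_eq_zero_of_forall_measure_sdiff_le {s : Set X} (hf : IntegrableOn f s μ)
    {C : ℝ≥0∞} (hC : C ≠ ∞)
    (h : ∀ t : ℝ≥0∞, t ≠ 0 →
      ∃ G ⊆ s, MeasurableSet G ∧ μ (s \ G) ≤ C * t ∧ ∫ x in G, f x ∂μ = 0) :
    ∫ x in s, f x ∂μ = 0 := by
  choose G hGs hG hGμ hG0 using fun n : ℕ => h (n + 1 : ℕ)⁻¹ (by simp)
  have hconst : ∀ n, ∫ x in s \ G n, f x ∂μ.restrict s = ∫ x in s, f x ∂μ := fun n => by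
    rw [Measure.restrict_restrict_of_subset sdiff_subset, setIntegral_sdiff (hG n) hf (hGs n), hG0,
      sub_zero]
  have hsmall : Tendsto (fun n : ℕ => C * ((n + 1 : ℕ) : ℝ≥0∞)⁻¹) atTop (𝓝 0) := by
    simpa using ENNReal.Tendsto.const_mul
      (ENNReal.tendsto_inv_nat_nhds_zero.comp (tendsto_add_atTop_nat 1)) (Or.inr hC)
  have hlim := hf.tendsto_setIntegral_nhds_zero (s := fun n => s \ G n)
    (tendsto_of_tendsto_of_tendsto_of_le_of_le tendsto_const_nhds hsmall (fun _ => bot_le)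
      fun n => (Measure.restrict_apply_le _ _).trans (hGμ n))
  simp only [hconst] at hlim
  exact tendsto_nhds_unique tendsto_const_nhds hlim

theorem setIntegral_iUnion_eq_zero {β : Type*} [Countable β] {s : β → Set X}
    (hs : ∀ b, MeasurableSet (s b)) (hd : Pairwise (Disjoint on s))
    (hf : IntegrableOn f (⋃ b, s b) μ) (h : ∀ b, ∫ x in s b, f x ∂μ = 0) :
    ∫ x in ⋃ b, s b, f x ∂μ = 0 := by
  simp [integral_iUnion hs hd hf, h]

end Approximation

section Boxes

variable {ι : Type*} [Fintype ι] {α : ι → Type*} [∀ i, MeasurableSpace (α i)]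
  (μ : ∀ i, Measure (α i)) [∀ i, SigmaFinite (μ i)]

theorem MeasureTheory.Measure.pi_univ_pi_le_prod {s : ∀ i, Set (α i)} {T : Finset ι}
    (hs : ∀ i ∉ T, μ i (s i) ≤ 1) :
    Measure.pi μ (univ.pi s) ≤ ∏ i ∈ T, μ i (s i) := by
  rw [Measure.pi_pi]
  exact Finset.prod_le_prod_of_subset_of_le_one' (Finset.subset_univ T) fun i _ hi => hs i hi

theorem MeasureTheory.Measure.pi_univ_pi_sdiff_univ_pi_le {s t : ∀ i, Set (α i)}
    (hs : ∀ i, μ i (s i) ≤ 1) :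
    Measure.pi μ (univ.pi s \ univ.pi t) ≤ ∑ i, μ i (s i \ t i) := by
  classical
  have hcover : univ.pi s \ univ.pi t ⊆ ⋃ i, univ.pi (update s i (s i \ t i)) := by
    rintro x ⟨hxs, hxt⟩
    obtain ⟨i, -, hi⟩ := not_forall₂.1 hxt
    refine mem_iUnion.2 ⟨i, fun j _ => ?_⟩
    rcases eq_or_ne j i with rfl | hji
    · simpa using ⟨hxs j trivial, hi⟩
    · simpa [hji] using hxs j trivial
  refine (measure_mono hcover).trans ((measure_iUnion_le _).trans ?_)
  rw [tsum_fintype]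
  refine Finset.sum_le_sum fun i _ => ?_
  simpa using Measure.pi_univ_pi_le_prod μ (s := update s i (s i \ t i)) (T := {i}) fun j hj => by
    simpa [Finset.mem_singleton.not.1 hj] using hs j

end Boxes

theorem Real.exists_fibres_volume_le {t : ℝ≥0∞} (ht : t ≠ 0) :
    ∃ κ : ℝ → ℤ, (∀ k, MeasurableSet (κ ⁻¹' {k})) ∧ ∀ k, volume (κ ⁻¹' {k}) ≤ t := by
  obtain ⟨n, hn⟩ := ENNReal.exists_inv_nat_lt ht
  have hn0 : (0 : ℝ) < n := Nat.cast_pos.2 (Nat.pos_of_ne_zero (by rintro rfl; simp at hn))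
  refine ⟨fun x => ⌊n * x⌋, fun k => (Int.measurable_floor.comp (measurable_const_mul _))
    (measurableSet_singleton k), fun k => ?_⟩
  have hsub : (fun x : ℝ => ⌊n * x⌋) ⁻¹' {k} ⊆ Icc (k / n) ((k + 1) / n) := by
    intro x hx
    obtain ⟨h1, h2⟩ := Int.floor_eq_iff.1 hx
    exact ⟨(div_le_iff₀ hn0).2 (by linarith), (le_div_iff₀ hn0).2 (by linarith)⟩
  refine (measure_mono hsub).trans (le_trans (le_of_eq ?_) hn.le)
  rw [Real.volume_Icc, ← sub_div, add_sub_cancel_left, one_div,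
    ENNReal.ofReal_inv_of_pos hn0, ENNReal.ofReal_natCast]

theorem volume_setOf_comp_eq_comp_le {ι K : Type*} [Fintype ι] [Countable K]
    {κ : ℝ → K} (hκ : ∀ k, MeasurableSet (κ ⁻¹' {k})) {t : ℝ≥0∞}
    (hκt : ∀ k, volume (κ ⁻¹' {k}) ≤ t) {i j : ι} (hij : i ≠ j) :
    volume {x ∈ univ.pi fun _ : ι => Icc (0 : ℝ) 1 | κ (x i) = κ (x j)} ≤ t := by
  classical
  set F : K → Set ℝ := fun k => Icc 0 1 ∩ κ ⁻¹' {k}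
  set side : K → ι → Set ℝ := fun k => update (update (fun _ => Icc 0 1) i (F k)) j (F k)
  set box : K → Set (ι → ℝ) := fun k => univ.pi (side k)
  have hcover : {x ∈ univ.pi fun _ : ι => Icc (0 : ℝ) 1 | κ (x i) = κ (x j)} ⊆ ⋃ k, box k := by
    rintro x ⟨hx, hxij⟩
    refine mem_iUnion.2 ⟨κ (x j), fun l _ => ?_⟩
    rcases eq_or_ne l j with rfl | hlj
    · simpa [side, F] using hx l trivial
    rcases eq_or_ne l i with rfl | hli
    · simpa [side, F, hlj] using ⟨hx l trivial, hxij⟩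
    · simpa [side, hlj, hli] using hx l trivial
  have hbox : ∀ k, volume (box k) ≤ t * volume (F k) := fun k => by
    calc volume (box k) ≤ ∏ l ∈ {i, j}, volume (side k l) :=
          Measure.pi_univ_pi_le_prod (fun _ => volume) fun l hl => by
            simp only [Finset.mem_insert, Finset.mem_singleton, not_or] at hl
            simp [side, hl.1, hl.2]
      _ = volume (F k) * volume (F k) := by rw [Finset.prod_pair hij]; simp [side, hij]
      _ ≤ t * volume (F k) := by gcongr; exact (measure_mono inter_subset_right).trans (hκt k)
  have hFd : Pairwise (Disjoint on F) := fun k k' hkk' =>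
    ((disjoint_singleton.2 hkk').preimage κ).mono inter_subset_right inter_subset_right
  calc _ ≤ ∑' k, volume (box k) := (measure_mono hcover).trans (measure_iUnion_le _)
    _ ≤ ∑' k, t * volume (F k) := ENNReal.tsum_le_tsum hbox
    _ = t * volume (⋃ k, F k) := by
        rw [ENNReal.tsum_mul_left, measure_iUnion hFd fun k => measurableSet_Icc.inter (hκ k)]
    _ ≤ t * volume (Icc (0 : ℝ) 1) := by gcongr; exact iUnion_subset fun k => inter_subset_left
    _ = t := by simp

theorem ae_eq_zero_of_forall_setIntegral_univ_pi_eq_zero {ι : Type*} [Fintype ι]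
    {α : ι → Type*} [∀ i, MeasurableSpace (α i)] {μ : Measure (∀ i, α i)} [IsFiniteMeasure μ]
    {E : Type*} [NormedAddCommGroup E] [NormedSpace ℝ E] [CompleteSpace E] {f : (∀ i, α i) → E}
    (hf : Integrable f μ)
    (h : ∀ s : ∀ i, Set (α i), (∀ i, MeasurableSet (s i)) → ∫ x in univ.pi s, f x ∂μ = 0) :
    f =ᵐ[μ] 0 := by
  have hall : ∀ t, MeasurableSet t → ∫ x in t, f x ∂μ = 0 := by
    refine MeasurableSpace.induction_on_inter generateFrom_pi.symm isPiSystem_pi (by simp) ?_ ?_ ?_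
    · rintro _ ⟨s, hs, rfl⟩
      exact h s fun i => hs i (mem_univ i)
    · intro t ht iht
      rw [setIntegral_compl ht hf, iht, sub_zero]
      simpa using h (fun _ => univ) fun _ => .univ
    · intro g hgd hgm ihg
      simp [integral_iUnion hgm hgd hf.integrableOn, ihg]
  exact ae_eq_zero_of_forall_setIntegral_eq_of_sigmaFinite (fun s _ _ => hf.integrableOn)
    fun s hs _ => hall s hs

def VanishesOnEqualMeasureDisjointBoxes {ι : Type*} [Fintype ι] (f : (ι → ℝ) → ℝ) : Prop :=
  ∀ A : ι → Set ℝ, (∀ i, MeasurableSet (A i)) → (∀ i, A i ⊆ Icc (0 : ℝ) 1) →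
    (∀ i j, i ≠ j → Disjoint (A i) (A j)) → (∀ i j, volume (A i) = volume (A j)) →
    ∫ x in univ.pi A, f x = 0

section Vanishing

variable {ι : Type*} [Fintype ι] {f : (ι → ℝ) → ℝ}

theorem setIntegral_univ_pi_eq_zero_of_pairwise_disjoint
    (hf : IntegrableOn f (univ.pi fun _ : ι => Icc (0 : ℝ) 1))
    (H : VanishesOnEqualMeasureDisjointBoxes f) {A : ι → Set ℝ}
    (hA : ∀ i, MeasurableSet (A i)) (hA01 : ∀ i, A i ⊆ Icc 0 1) (hAd : Pairwise (Disjoint on A)) :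
    ∫ x in univ.pi A, f x = 0 := by
  unfold VanishesOnEqualMeasureDisjointBoxes at H
  refine setIntegral_eq_zero_of_forall_measure_sdiff_le (hf.mono_set (pi_mono fun i _ => hA01 i))
    (C := Fintype.card ι) (ENNReal.natCast_ne_top _) fun t ht => ?_
  choose P hPfin hPd hPA hPrem using
    fun i => Real.exists_finite_pairwiseDisjoint_volume_eq (hA i) (hA01 i) ht
  have (i : ι) : Finite (P i) := (hPfin i).to_subtype
  have hG : ⋃ τ : ∀ i, P i, univ.pi (fun i => (τ i : Set ℝ)) = univ.pi fun i => ⋃₀ P i := by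
    simp_rw [iUnion_univ_pi, sUnion_eq_iUnion]
  have hGA : (univ.pi fun i => ⋃₀ P i) ⊆ univ.pi A :=
    pi_mono fun i _ => sUnion_subset fun p hp => (hPA i p hp).1
  refine ⟨_, hGA, .univ_pi fun i => .sUnion (hPfin i).countable fun p hp => (hPA i p hp).2.1,
    ?_, ?_⟩
  · calc volume (univ.pi A \ univ.pi fun i => ⋃₀ P i) ≤ ∑ i, volume (A i \ ⋃₀ P i) :=
          Measure.pi_univ_pi_sdiff_univ_pi_le _ fun i => (measure_mono (hA01 i)).trans (by simp)
      _ ≤ ∑ _i : ι, t := Finset.sum_le_sum fun i _ => (hPrem i).le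
      _ = Fintype.card ι * t := by simp
  rw [← hG]
  refine setIntegral_iUnion_eq_zero (fun τ => .univ_pi fun i => (hPA i _ (τ i).2).2.1)
    (fun τ τ' hne => ?_) (hG ▸ hf.mono_set (hGA.trans (pi_mono fun i _ => hA01 i)))
    fun τ => H _ (fun i => (hPA i _ (τ i).2).2.1) (fun i => (hPA i _ (τ i).2).1.trans (hA01 i))
      (fun i j hij => (hAd hij).mono (hPA i _ (τ i).2).1 (hPA j _ (τ j).2).1)
      fun i j => by rw [(hPA i _ (τ i).2).2.2, (hPA j _ (τ j).2).2.2]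
  obtain ⟨i, hi⟩ := Function.ne_iff.1 hne
  exact disjoint_univ_pi.2 ⟨i, hPd i (τ i).2 (τ' i).2 (Subtype.coe_injective.ne hi)⟩

theorem setIntegral_univ_pi_eq_zero
    (hf : IntegrableOn f (univ.pi fun _ : ι => Icc (0 : ℝ) 1))
    (H : VanishesOnEqualMeasureDisjointBoxes f) {B : ι → Set ℝ}
    (hB : ∀ i, MeasurableSet (B i)) (hB01 : ∀ i, B i ⊆ Icc 0 1) :
    ∫ x in univ.pi B, f x = 0 := by
  classical
  refine setIntegral_eq_zero_of_forall_measure_sdiff_le (hf.mono_set (pi_mono fun i _ => hB01 i))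
    (C := Fintype.card {p : ι × ι // p.1 ≠ p.2}) (ENNReal.natCast_ne_top _) fun t ht => ?_
  obtain ⟨κ, hκ, hκt⟩ := Real.exists_fibres_volume_le ht
  set piece : (ι → ℤ) → Set (ι → ℝ) := fun τ => univ.pi fun i => B i ∩ κ ⁻¹' {τ i}
  have hGB : ⋃ τ : {τ : ι → ℤ // Injective τ}, piece τ ⊆ univ.pi B :=
    iUnion_subset fun τ => pi_mono fun i _ => inter_subset_left
  have hfibre : ∀ {k k' : ℤ}, k ≠ k' → Disjoint (κ ⁻¹' {k}) (κ ⁻¹' {k'}) := fun h =>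
    (disjoint_singleton.2 h).preimage κ
  refine ⟨_, hGB, .iUnion fun τ => .univ_pi fun i => (hB i).inter (hκ _), ?_, ?_⟩
  · have hcover : univ.pi B \ ⋃ τ : {τ : ι → ℤ // Injective τ}, piece τ ⊆
        ⋃ p : {p : ι × ι // p.1 ≠ p.2},
          {x ∈ univ.pi fun _ : ι => Icc (0 : ℝ) 1 | κ (x p.1.1) = κ (x p.1.2)} := by
      rintro x ⟨hxB, hx⟩
      have : ¬ Injective (κ ∘ x) := fun hinj =>
        hx (mem_iUnion.2 ⟨⟨κ ∘ x, hinj⟩, fun i _ => ⟨hxB i trivial, rfl⟩⟩)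
      obtain ⟨i, j, hκij, hij⟩ := Function.not_injective_iff.1 this
      exact mem_iUnion.2 ⟨⟨(i, j), hij⟩, fun l _ => hB01 l (hxB l trivial), hκij⟩
    refine (measure_mono hcover).trans ((measure_iUnion_le _).trans ?_)
    rw [tsum_fintype]
    refine (Finset.sum_le_sum fun p _ => volume_setOf_comp_eq_comp_le hκ hκt p.2).trans ?_
    simp
  refine setIntegral_iUnion_eq_zero (fun τ => .univ_pi fun i => (hB i).inter (hκ _))
    (fun τ τ' hne => ?_) (hf.mono_set (hGB.trans (pi_mono fun i _ => hB01 i)))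
    fun τ => setIntegral_univ_pi_eq_zero_of_pairwise_disjoint hf H
      (fun i => (hB i).inter (hκ _)) (fun i => inter_subset_left.trans (hB01 i))
      fun i j hij => (hfibre (τ.2.ne hij)).mono inter_subset_right inter_subset_right
  obtain ⟨i, hi⟩ := Function.ne_iff.1 (Subtype.coe_injective.ne hne)
  exact disjoint_univ_pi.2 ⟨i, (hfibre hi).mono inter_subset_right inter_subset_right⟩

end Vanishing

theorem stmt8_general (m : ℕ) (f : (Fin m → ℝ) → ℝ)
    (hf : IntegrableOn f (Set.univ.pi fun _ : Fin m => Set.Icc (0 : ℝ) 1) volume)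
    (H : ∀ A : Fin m → Set ℝ, (∀ i, MeasurableSet (A i)) →
      (∀ i, A i ⊆ Set.Icc (0 : ℝ) 1) →
      (∀ i j, i ≠ j → Disjoint (A i) (A j)) →
      (∀ i j, volume (A i) = volume (A j)) →
      ∫ x in Set.univ.pi A, f x = 0) :
    ∀ᵐ x ∂((volume : Measure (Fin m → ℝ)).restrict
        (Set.univ.pi fun _ : Fin m => Set.Icc (0 : ℝ) 1)), f x = 0 := by
  have : IsFiniteMeasure (volume.restrict (univ.pi fun _ : Fin m => Icc (0 : ℝ) 1)) :=
    isFiniteMeasure_restrict.2 (isCompact_univ_pi fun _ => isCompact_Icc).measure_lt_top.ne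
  refine ae_eq_zero_of_forall_setIntegral_univ_pi_eq_zero hf fun B hB => ?_
  rw [Measure.restrict_restrict (.univ_pi hB), ← pi_inter_distrib]
  exact setIntegral_univ_pi_eq_zero hf H (fun i => (hB i).inter measurableSet_Icc)
    fun i => inter_subset_right

/-- **Lemma.** If `f : [0,1]^m → ℝ` is integrable and `∫_{A₁ × ⋯ × A_m} f = 0` for all
`m`-tuples of pairwise disjoint measurable subsets of `[0,1]` of equal Lebesgue measure,
then `f = 0` almost everywhere on `[0,1]^m`. -/
theorem stmt8 (m : ℕ) (hm : 1 ≤ m) (f : (Fin m → ℝ) → ℝ)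
    (hf : IntegrableOn f (Set.univ.pi fun _ : Fin m => Set.Icc (0 : ℝ) 1) volume)
    (H : ∀ A : Fin m → Set ℝ, (∀ i, MeasurableSet (A i)) →
      (∀ i, A i ⊆ Set.Icc (0 : ℝ) 1) →
      (∀ i j, i ≠ j → Disjoint (A i) (A j)) →
      (∀ i j, volume (A i) = volume (A j)) →
      ∫ x in Set.univ.pi A, f x = 0) :
    ∀ᵐ x ∂((volume : Measure (Fin m → ℝ)).restrict
        (Set.univ.pi fun _ : Fin m => Set.Icc (0 : ℝ) 1)), f x = 0 :=
  stmt8_general m f hf H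
end

section
/- Let m ≥ 1 and let f : [0,1]^m → ℝ be Lebesgue integrable. Suppose that ∫_{A^m} f dλ^m = 0 for every Lebesgue-measurable subset A of [0,1]. Then the symmetrization f̃ of f satisfies f̃ = 0 almost everywhere on [0,1]^m. -/
set_option maxHeartbeats 1000000

open MeasureTheory

/-- The symmetrization `f̃(x₁,…,x_m) = (1/m!) ∑_{σ ∈ S_m} f(x_{σ(1)},…,x_{σ(m)})`. -/
noncomputable def symmetrize (m : ℕ) (f : (Fin m → ℝ) → ℝ) : (Fin m → ℝ) → ℝ :=
  fun x => (m.factorial : ℝ)⁻¹ * ∑ σ : Equiv.Perm (Fin m), f (x ∘ σ)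


noncomputable def permME (m : ℕ) (σ : Equiv.Perm (Fin m)) : (Fin m → ℝ) ≃ᵐ (Fin m → ℝ) :=
  MeasurableEquiv.piCongrLeft (fun _ => ℝ) σ.symm

lemma permME_apply (m : ℕ) (σ : Equiv.Perm (Fin m)) (x : Fin m → ℝ) :
    permME m σ x = x ∘ σ := by
  funext j
  rw [show j = σ.symm (σ j) by simp]
  rw [permME, MeasurableEquiv.coe_piCongrLeft, Equiv.piCongrLeft_apply_apply]
  simp

lemma permME_coe (m : ℕ) (σ : Equiv.Perm (Fin m)) :
    ⇑(permME m σ) = fun x : Fin m → ℝ => x ∘ σ := by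
  funext x; exact permME_apply m σ x

lemma permMP (m : ℕ) (σ : Equiv.Perm (Fin m)) :
    MeasurePreserving (fun x : Fin m → ℝ => x ∘ σ) volume volume := by
  rw [← permME_coe]
  exact volume_measurePreserving_piCongrLeft (fun _ => ℝ) σ.symm

lemma permEmb (m : ℕ) (σ : Equiv.Perm (Fin m)) :
    MeasurableEmbedding (fun x : Fin m → ℝ => x ∘ σ) := by
  rw [← permME_coe]; exact (permME m σ).measurableEmbedding

lemma perm_image (m : ℕ) (σ : Equiv.Perm (Fin m)) (A : Fin m → Set ℝ) :
    (fun x : Fin m → ℝ => x ∘ σ) '' (Set.univ.pi A) = Set.univ.pi (fun j => A (σ j)) := by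
  ext y
  constructor
  · rintro ⟨x, hx, rfl⟩ j _
    exact hx (σ j) trivial
  · intro hy
    refine ⟨y ∘ σ.symm, fun j _ => ?_, ?_⟩
    · have := hy (σ.symm j) trivial
      simpa using this
    · funext j; simp

lemma perm_setIntegral (m : ℕ) (σ : Equiv.Perm (Fin m)) (A : Fin m → Set ℝ) (g : (Fin m → ℝ) → ℝ) :
    ∫ x in Set.univ.pi (fun j => A (σ j)), g x = ∫ x in Set.univ.pi A, g (x ∘ σ) := by
  rw [← perm_image m σ A]
  exact (permMP m σ).setIntegral_image_emb (permEmb m σ) g _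

lemma perm_integrableOn (m : ℕ) (σ : Equiv.Perm (Fin m)) (g : (Fin m → ℝ) → ℝ) (s : Set (Fin m → ℝ))
    (hg : IntegrableOn g ((fun x : Fin m → ℝ => x ∘ σ) '' s) volume) :
    IntegrableOn (fun x => g (x ∘ σ)) s volume := by
  have := ((permMP m σ).restrict_image_emb (permEmb m σ) s).integrable_comp_emb (permEmb m σ) (g := g)
  exact this.mpr hg


lemma neg_one_pow_sub_aux {c k : ℕ} (h : k ≤ c) : ((-1 : ℝ))^(c - k) = (-1)^c * (-1)^k := by
  have : ((-1 : ℝ))^(c - k) * (-1)^k = (-1)^c := by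
    rw [← pow_add, Nat.sub_add_cancel h]
  rw [← this, mul_assoc, ← pow_add, ← two_mul, pow_mul]
  norm_num

lemma aux_ie {α : Type*} [Fintype α] [DecidableEq α] (R : Finset α) :
    ∑ s ∈ Finset.univ.powerset.filter (fun s => R ⊆ s), (-1 : ℝ)^(Fintype.card α - s.card)
      = if R = Finset.univ then 1 else 0 := by
  classical
  rw [Finset.sum_nbij' (i := fun s => s \ R) (j := fun t => R ∪ t)
      (t := Rᶜ.powerset) (g := fun t => (-1 : ℝ)^(Rᶜ.card - t.card))]
  · have hterm : ∀ t ∈ Rᶜ.powerset, ((-1 : ℝ))^(Rᶜ.card - t.card) = (-1)^Rᶜ.card * (-1)^t.card := by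
      intro t ht
      exact neg_one_pow_sub_aux (Finset.card_le_card (Finset.mem_powerset.mp ht))
    have hz : ∑ t ∈ Rᶜ.powerset, ((-1:ℝ))^t.card = if Rᶜ = ∅ then 1 else 0 := by
      have := Finset.sum_powerset_neg_one_pow_card (x := Rᶜ)
      have := congrArg (fun z : ℤ => (z : ℝ)) this
      push_cast at this
      simpa using this
    rw [Finset.sum_congr rfl hterm, ← Finset.mul_sum, hz]
    by_cases h : R = Finset.univ
    · have : Rᶜ = ∅ := by simp [h]
      simp [h, this]
    · have : Rᶜ ≠ ∅ := by
        intro he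
        exact h (by simpa [Finset.compl_eq_empty_iff] using he)
      simp [h, this]
  · intro s hs
    simp only [Finset.mem_filter, Finset.mem_powerset] at hs ⊢
    intro a ha
    rw [Finset.mem_compl]
    exact (Finset.mem_sdiff.mp ha).2
  · intro t ht
    simp only [Finset.mem_powerset] at ht
    simp [Finset.mem_filter, Finset.mem_powerset]
  · intro s hs
    simp only [Finset.mem_filter, Finset.mem_powerset] at hs
    exact Finset.union_sdiff_of_subset hs.2
  · intro t ht
    simp only [Finset.mem_powerset] at ht
    rw [Finset.union_sdiff_left]
    exact Finset.sdiff_eq_self_of_disjoint (Finset.disjoint_left.mpr fun a ha => by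
      have := ht ha; simp at this; exact this)
  · intro s hs
    simp only [Finset.mem_filter, Finset.mem_powerset] at hs
    have hcard : (s \ R).card = s.card - R.card := Finset.card_sdiff_of_subset hs.2
    have h1 : s.card ≤ Fintype.card α := Finset.card_le_univ s
    have h2 : R.card ≤ s.card := Finset.card_le_card hs.2
    rw [Finset.card_compl, hcard]
    congr 1
    omega

lemma disjoint_pi_integral (m : ℕ) (g : (Fin m → ℝ) → ℝ)
    (hgint : IntegrableOn g (Set.univ.pi fun _ : Fin m => Set.Icc (0:ℝ) 1) volume)
    (hsymm : ∀ (σ : Equiv.Perm (Fin m)) (x : Fin m → ℝ), g (x ∘ σ) = g x)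
    (hHg : ∀ A : Set ℝ, MeasurableSet A → A ⊆ Set.Icc (0:ℝ) 1 →
      ∫ x in Set.univ.pi fun _ : Fin m => A, g x = 0)
    (A : Fin m → Set ℝ) (hA : ∀ i, MeasurableSet (A i)) (hAsub : ∀ i, A i ⊆ Set.Icc (0:ℝ) 1)
    (hdisj : Pairwise (Function.onFun Disjoint A)) :
    ∫ x in Set.univ.pi A, g x = 0 := by
  classical
  set I : (Fin m → Fin m) → ℝ := fun φ => ∫ x in Set.univ.pi (fun j => A (φ j)), g x with hI
  have hboxmeas : ∀ φ : Fin m → Fin m, MeasurableSet (Set.univ.pi (fun j => A (φ j))) :=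
    fun φ => MeasurableSet.univ_pi (fun j => hA (φ j))
  have hboxint : ∀ φ : Fin m → Fin m, IntegrableOn g (Set.univ.pi (fun j => A (φ j))) volume :=
    fun φ => hgint.mono_set (Set.pi_mono fun i _ => hAsub (φ i))
  -- step 1 : decomposition for each s
  have hsum : ∀ s : Finset (Fin m),
      ∑ φ ∈ Finset.univ.filter (fun φ : Fin m → Fin m => ∀ j, φ j ∈ s), I φ = 0 := by
    intro s
    have hU : MeasurableSet (⋃ i ∈ s, A i) := s.measurableSet_biUnion (fun i _ => hA i)
    have hUsub : (⋃ i ∈ s, A i) ⊆ Set.Icc (0:ℝ) 1 := Set.iUnion₂_subset fun i _ => hAsub i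
    have key : (Set.univ.pi fun _ : Fin m => ⋃ i ∈ s, A i)
        = ⋃ φ ∈ Finset.univ.filter (fun φ : Fin m → Fin m => ∀ j, φ j ∈ s),
            Set.univ.pi (fun j => A (φ j)) := by
      ext x
      simp only [Set.mem_pi, Set.mem_univ, true_implies, Set.mem_iUnion, Finset.mem_filter,
        Finset.mem_univ, true_and]
      constructor
      · intro hx
        have hx' : ∀ j, ∃ i, i ∈ s ∧ x j ∈ A i := by
          intro j
          obtain ⟨i, hi, hxi⟩ := hx j
          exact ⟨i, hi, hxi⟩
        choose ψ h1 h2 using hx'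
        exact ⟨ψ, h1, fun j => h2 j⟩
      · rintro ⟨φ, hφ, hx⟩ j
        exact ⟨φ j, hφ j, hx j⟩
    have hdisjboxes : (↑(Finset.univ.filter (fun φ : Fin m → Fin m => ∀ j, φ j ∈ s)) :
        Set (Fin m → Fin m)).Pairwise
          (Function.onFun Disjoint (fun φ => Set.univ.pi (fun j => A (φ j)))) := by
      intro φ _ ψ _ hne
      obtain ⟨j, hj⟩ := Function.ne_iff.mp hne
      refine Set.disjoint_left.mpr fun x hxφ hxψ => ?_
      exact Set.disjoint_left.mp (hdisj hj) (hxφ j trivial) (hxψ j trivial)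
    have := hHg _ hU hUsub
    rw [key, integral_biUnion_finset _ (fun φ _ => hboxmeas φ) hdisjboxes
      (fun φ _ => hboxint φ)] at this
    exact this
  -- step 2 : inclusion-exclusion
  have h0 : ∑ s : Finset (Fin m), ((-1:ℝ))^(m - s.card) *
      (∑ φ ∈ Finset.univ.filter (fun φ : Fin m → Fin m => ∀ j, φ j ∈ s), I φ) = 0 := by
    simp [hsum]
  have h1 : ∑ s : Finset (Fin m), ((-1:ℝ))^(m - s.card) *
      (∑ φ ∈ Finset.univ.filter (fun φ : Fin m → Fin m => ∀ j, φ j ∈ s), I φ)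
      = ∑ φ : Fin m → Fin m,
          (∑ s ∈ Finset.univ.filter (fun s : Finset (Fin m) => ∀ j, φ j ∈ s),
            ((-1:ℝ))^(m - s.card)) * I φ := by
    simp_rw [Finset.mul_sum, Finset.sum_filter, Finset.sum_mul]
    rw [Finset.sum_comm]
    refine Finset.sum_congr rfl fun φ _ => Finset.sum_congr rfl fun s _ => ?_
    by_cases h : ∀ j, φ j ∈ s <;> simp [h]
  have h2 : ∀ φ : Fin m → Fin m,
      (∑ s ∈ Finset.univ.filter (fun s : Finset (Fin m) => ∀ j, φ j ∈ s), ((-1:ℝ))^(m - s.card))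
        = if Finset.image φ Finset.univ = Finset.univ then 1 else 0 := by
    intro φ
    have hcond : ∀ s : Finset (Fin m), (∀ j, φ j ∈ s) ↔ Finset.image φ Finset.univ ⊆ s := by
      intro s
      rw [Finset.image_subset_iff]
      simp
    have := aux_ie (R := Finset.image φ Finset.univ)
    rw [Finset.powerset_univ] at this
    rw [← this]
    refine Finset.sum_congr ?_ fun s _ => by rw [Fintype.card_fin]
    ext s
    simp [hcond s]
  have h3 : ∑ s : Finset (Fin m), ((-1:ℝ))^(m - s.card) *
      (∑ φ ∈ Finset.univ.filter (fun φ : Fin m → Fin m => ∀ j, φ j ∈ s), I φ)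
      = ∑ φ ∈ Finset.univ.filter
          (fun φ : Fin m → Fin m => Finset.image φ Finset.univ = Finset.univ), I φ := by
    rw [h1]
    simp_rw [h2]
    rw [Finset.sum_filter]
    refine Finset.sum_congr rfl fun φ _ => ?_
    by_cases h : Finset.image φ Finset.univ = Finset.univ <;> simp [h]
  -- step 3 : surjective functions = permutations
  have h4 : Finset.univ.filter
      (fun φ : Fin m → Fin m => Finset.image φ Finset.univ = Finset.univ)
      = Finset.univ.image (fun σ : Equiv.Perm (Fin m) => ⇑σ) := by
    ext φ
    simp only [Finset.mem_filter, Finset.mem_univ, true_and, Finset.mem_image]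
    constructor
    · intro h
      have hsurj : Function.Surjective φ := by
        intro y
        have : y ∈ Finset.image φ Finset.univ := by rw [h]; exact Finset.mem_univ y
        obtain ⟨x, _, hx⟩ := Finset.mem_image.mp this
        exact ⟨x, hx⟩
      have hbij : Function.Bijective φ := Finite.surjective_iff_bijective.mp hsurj
      exact ⟨Equiv.ofBijective φ hbij, rfl⟩
    · rintro ⟨σ, rfl⟩
      rw [Finset.eq_univ_iff_forall]
      intro y
      exact Finset.mem_image.mpr ⟨σ.symm y, Finset.mem_univ _, by simp⟩
  have h5 : ∑ φ ∈ Finset.univ.filter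
      (fun φ : Fin m → Fin m => Finset.image φ Finset.univ = Finset.univ), I φ
      = ∑ σ : Equiv.Perm (Fin m), I ⇑σ := by
    rw [h4, Finset.sum_image]
    intro σ _ τ _ h
    exact Equiv.coe_fn_injective h
  have h6 : ∀ σ : Equiv.Perm (Fin m), I ⇑σ = ∫ x in Set.univ.pi A, g x := by
    intro σ
    rw [hI]
    simp only
    rw [perm_setIntegral m σ A g]
    exact setIntegral_congr_fun (MeasurableSet.univ_pi (fun i => hA i))
      (fun x _ => hsymm σ x)
  have h7 : (0:ℝ) = (m.factorial : ℝ) * ∫ x in Set.univ.pi A, g x := by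
    rw [← h0, h3, h5]
    simp_rw [h6]
    rw [Finset.sum_const, Finset.card_univ, Fintype.card_perm, Fintype.card_fin, nsmul_eq_mul]
  have hfac : (m.factorial : ℝ) ≠ 0 := Nat.cast_ne_zero.mpr (Nat.factorial_ne_zero m)
  rcases mul_eq_zero.mp h7.symm with h | h
  · exact absurd h hfac
  · exact h


lemma slab_null (m : ℕ) (i : Fin m) : volume {x : Fin m → ℝ | x i = 0} = 0 := by
  have h : {x : Fin m → ℝ | x i = 0}
      = Set.univ.pi (fun j => if j = i then ({0} : Set ℝ) else Set.univ) := by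
    ext x
    simp only [Set.mem_setOf_eq, Set.mem_pi, Set.mem_univ, true_implies]
    constructor
    · intro hx j
      by_cases hj : j = i <;> simp [hj, hx]
    · intro hx
      have := hx i
      simpa using this
  rw [h, volume_pi_pi]
  exact Finset.prod_eq_zero (Finset.mem_univ i) (by simp)

lemma diag_null (m : ℕ) (i j : Fin m) (hij : i ≠ j) :
    volume {x : Fin m → ℝ | x i = x j} = 0 := by
  have h : {x : Fin m → ℝ | x i = x j} = (LinearMap.ker ((LinearMap.proj i : (Fin m → ℝ) →ₗ[ℝ] ℝ)
      - LinearMap.proj j) : Set (Fin m → ℝ)) := by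
    ext x; simp [sub_eq_zero, LinearMap.mem_ker]
  rw [h]
  apply Measure.addHaar_submodule
  intro h'
  have h1 : (Pi.single i 1 : Fin m → ℝ) ∈ LinearMap.ker ((LinearMap.proj i : (Fin m → ℝ) →ₗ[ℝ] ℝ)
      - LinearMap.proj j) := h' ▸ trivial
  simp [LinearMap.mem_ker, Pi.single_apply, hij, hij.symm] at h1

-- dyadic cells
noncomputable def dcell (N k : ℕ) : Set ℝ := Set.Ioc ((k:ℝ) * (2^N : ℝ)⁻¹) (((k:ℝ)+1) * (2^N : ℝ)⁻¹)

lemma dcell_measurable (N k : ℕ) : MeasurableSet (dcell N k) := measurableSet_Ioc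

lemma dcell_subset (N k : ℕ) (hk : k < 2^N) : dcell N k ⊆ Set.Icc (0:ℝ) 1 := by
  intro x hx
  obtain ⟨h1, h2⟩ := hx
  have hpos : (0:ℝ) < (2^N : ℝ)⁻¹ := by positivity
  have h0 : (0:ℝ) ≤ (k:ℝ) * (2^N : ℝ)⁻¹ := by positivity
  have hk1 : ((k:ℝ)+1) ≤ (2^N : ℝ) := by
    have : (k:ℝ) + 1 ≤ ((2^N : ℕ) : ℝ) := by exact_mod_cast hk
    simpa using this
  constructor
  · linarith
  · calc x ≤ ((k:ℝ)+1) * (2^N : ℝ)⁻¹ := h2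
      _ ≤ (2^N : ℝ) * (2^N : ℝ)⁻¹ := by
          apply mul_le_mul_of_nonneg_right hk1 (le_of_lt hpos)
      _ = 1 := by
          rw [mul_inv_cancel₀]
          positivity

lemma dcell_disjoint (N : ℕ) {k l : ℕ} (hkl : k ≠ l) : Disjoint (dcell N k) (dcell N l) := by
  rw [dcell, dcell, Set.Ioc_disjoint_Ioc]
  have hpos : (0:ℝ) < (2^N : ℝ)⁻¹ := by positivity
  rcases hkl.lt_or_gt with h | h
  · have : (k:ℝ) + 1 ≤ (l:ℝ) := by exact_mod_cast h
    calc min (((k:ℝ)+1) * (2^N : ℝ)⁻¹) (((l:ℝ)+1) * (2^N : ℝ)⁻¹)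
        ≤ ((k:ℝ)+1) * (2^N : ℝ)⁻¹ := min_le_left _ _
      _ ≤ (l:ℝ) * (2^N : ℝ)⁻¹ := by nlinarith
      _ ≤ max ((k:ℝ) * (2^N : ℝ)⁻¹) ((l:ℝ) * (2^N : ℝ)⁻¹) := le_max_right _ _
  · have : (l:ℝ) + 1 ≤ (k:ℝ) := by exact_mod_cast h
    calc min (((k:ℝ)+1) * (2^N : ℝ)⁻¹) (((l:ℝ)+1) * (2^N : ℝ)⁻¹)
        ≤ ((l:ℝ)+1) * (2^N : ℝ)⁻¹ := min_le_right _ _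
      _ ≤ (k:ℝ) * (2^N : ℝ)⁻¹ := by nlinarith
      _ ≤ max ((k:ℝ) * (2^N : ℝ)⁻¹) ((l:ℝ) * (2^N : ℝ)⁻¹) := le_max_left _ _

lemma dcell_cover (N : ℕ) : Set.Ioc (0:ℝ) 1 ⊆ ⋃ k : Fin (2^N), dcell N (k:ℕ) := by
  intro x hx
  obtain ⟨hx0, hx1⟩ := hx
  have h2 : (0:ℝ) < (2^N : ℝ) := by positivity
  set y := x * (2^N : ℝ) with hy
  have hy0 : 0 < y := by positivity
  set c := ⌈y⌉₊ with hc
  have hc1 : 1 ≤ c := Nat.one_le_ceil_iff.mpr hy0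
  have hcy : y ≤ (c:ℝ) := Nat.le_ceil y
  have hcy2 : (c:ℝ) - 1 < y := by
    have := Nat.ceil_lt_add_one (le_of_lt hy0)
    linarith
  have hcn : c ≤ 2^N := by
    rw [hc]
    apply Nat.ceil_le.mpr
    rw [hy]
    calc x * (2^N:ℝ) ≤ 1 * (2^N:ℝ) := by nlinarith
      _ = ((2^N : ℕ) : ℝ) := by simp
  have hk : c - 1 < 2^N := by omega
  refine Set.mem_iUnion.mpr ⟨⟨c - 1, hk⟩, ?_⟩
  have hcast : ((c - 1 : ℕ) : ℝ) = (c:ℝ) - 1 := by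
    have : (1:ℕ) ≤ c := hc1
    push_cast [Nat.cast_sub this]
    ring
  constructor
  · show ((c - 1 : ℕ):ℝ) * (2^N : ℝ)⁻¹ < x
    rw [hcast]
    calc ((c:ℝ) - 1) * (2^N : ℝ)⁻¹ < y * (2^N : ℝ)⁻¹ := by
          apply mul_lt_mul_of_pos_right hcy2 (by positivity)
      _ = x := by
          rw [hy, mul_assoc, mul_inv_cancel₀ (ne_of_gt h2), mul_one]
  · show x ≤ (((c - 1 : ℕ):ℝ) + 1) * (2^N : ℝ)⁻¹
    rw [hcast]
    have : ((c:ℝ) - 1) + 1 = (c:ℝ) := by ring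
    rw [this]
    calc x = y * (2^N : ℝ)⁻¹ := by
          rw [hy, mul_assoc, mul_inv_cancel₀ (ne_of_gt h2), mul_one]
      _ ≤ (c:ℝ) * (2^N : ℝ)⁻¹ := by
          apply mul_le_mul_of_nonneg_right hcy (by positivity)

lemma dcell_diam (N k : ℕ) {x y : ℝ} (hx : x ∈ dcell N k) (hy : y ∈ dcell N k) :
    |x - y| ≤ (2^N : ℝ)⁻¹ := by
  obtain ⟨hx1, hx2⟩ := hx
  obtain ⟨hy1, hy2⟩ := hy
  have : ((k:ℝ)+1) * (2^N : ℝ)⁻¹ - (k:ℝ) * (2^N : ℝ)⁻¹ = (2^N : ℝ)⁻¹ := by ring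
  rw [abs_le]
  constructor <;> nlinarith

lemma box_integral (m : ℕ) (g : (Fin m → ℝ) → ℝ)
    (hgint : IntegrableOn g (Set.univ.pi fun _ : Fin m => Set.Icc (0:ℝ) 1) volume)
    (hsymm : ∀ (σ : Equiv.Perm (Fin m)) (x : Fin m → ℝ), g (x ∘ σ) = g x)
    (hHg : ∀ A : Set ℝ, MeasurableSet A → A ⊆ Set.Icc (0:ℝ) 1 →
      ∫ x in Set.univ.pi fun _ : Fin m => A, g x = 0)
    (B : Fin m → Set ℝ) (hB : ∀ i, MeasurableSet (B i)) (hBsub : ∀ i, B i ⊆ Set.Icc (0:ℝ) 1) :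
    ∫ x in Set.univ.pi B, g x = 0 := by
  classical
  set B' : Fin m → Set ℝ := fun i => B i ∩ Set.Ioc (0:ℝ) 1 with hB'
  have hB'meas : ∀ i, MeasurableSet (B' i) := fun i => (hB i).inter measurableSet_Ioc
  have hB'sub : ∀ i, B' i ⊆ Set.Ioc (0:ℝ) 1 := fun i => Set.inter_subset_right
  have hB'Icc : ∀ i, B' i ⊆ Set.Icc (0:ℝ) 1 := fun i => (hB'sub i).trans Set.Ioc_subset_Icc_self
  -- reduction to B'
  have hred : ∫ x in Set.univ.pi B, g x = ∫ x in Set.univ.pi B', g x := by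
    apply setIntegral_congr_set
    rw [MeasureTheory.ae_eq_set]
    constructor
    · refine measure_mono_null ?_ (measure_iUnion_null (fun i => slab_null m i))
      · intro x hx
        simp only [Set.mem_diff, Set.mem_pi, Set.mem_univ, true_implies] at hx
        obtain ⟨hx1, hx2⟩ := hx
        push_neg at hx2
        obtain ⟨i, hi⟩ := hx2
        refine Set.mem_iUnion.mpr ⟨i, ?_⟩
        have hxi : x i ∈ Set.Icc (0:ℝ) 1 := hBsub i (hx1 i)
        have : x i ∉ Set.Ioc (0:ℝ) 1 := fun h => hi ⟨hx1 i, h⟩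
        simp only [Set.mem_Ioc, not_and_or, not_lt, not_le] at this
        rcases this with h | h
        · exact le_antisymm h hxi.1
        · exact absurd hxi.2 (not_le.mpr h)
    · have : Set.univ.pi B' \ Set.univ.pi B = ∅ := by
        rw [Set.diff_eq_empty]
        exact Set.pi_mono fun i _ => Set.inter_subset_left
      simp [this]
  rw [hred]
  -- the exceptional sets
  set E : ℕ → Set (Fin m → ℝ) := fun N =>
    (Set.univ.pi fun _ : Fin m => Set.Icc (0:ℝ) 1) ∩
      ⋃ (p : Fin m × Fin m) (_ : p.1 ≠ p.2), {x | |x p.1 - x p.2| ≤ (2^N : ℝ)⁻¹} with hE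
  have hEmeas : ∀ N, MeasurableSet (E N) := by
    intro N
    apply (MeasurableSet.univ_pi fun _ => measurableSet_Icc).inter
    apply MeasurableSet.iUnion
    intro p
    apply MeasurableSet.iUnion
    intro _
    exact measurableSet_le (((measurable_pi_apply p.1).sub (measurable_pi_apply p.2)).abs)
      measurable_const
  have hEanti : Antitone E := by
    apply antitone_nat_of_succ_le
    intro N
    apply Set.inter_subset_inter_right
    apply Set.iUnion_mono
    intro p
    apply Set.iUnion_mono'
    intro hp
    refine ⟨hp, fun x hx => ?_⟩
    simp only [Set.mem_setOf_eq] at hx ⊢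
    have : ((2:ℝ)^(N+1))⁻¹ ≤ ((2:ℝ)^N)⁻¹ := by
      apply inv_anti₀ (by positivity)
      apply pow_le_pow_right₀ (by norm_num) (by omega)
    linarith
  have habs : IntegrableOn (fun x => |g x|) (Set.univ.pi fun _ : Fin m => Set.Icc (0:ℝ) 1)
      volume := hgint.abs
  have hEint : ∀ N, IntegrableOn (fun x => |g x|) (E N) volume :=
    fun N => habs.mono_set Set.inter_subset_left
  -- the intersection is null
  have hInull : volume (⋂ N, E N) = 0 := by
    refine measure_mono_null ?_ (measure_iUnion_null (fun (p : Fin m × Fin m) =>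
      measure_iUnion_null (fun (hp : p.1 ≠ p.2) => diag_null m p.1 p.2 hp)))
    · intro x hx
      rw [Set.mem_iInter] at hx
      by_contra hcon
      have hcon' : ∀ p : Fin m × Fin m, p.1 ≠ p.2 → x p.1 ≠ x p.2 := by
        intro p hp heq
        exact hcon (Set.mem_iUnion.mpr ⟨p, Set.mem_iUnion.mpr ⟨hp, heq⟩⟩)
      have hchoice : ∀ p : Fin m × Fin m, ∃ N : ℕ, p.1 ≠ p.2 → ¬ (|x p.1 - x p.2| ≤ (2^N : ℝ)⁻¹) := by
        intro p
        by_cases hp : p.1 = p.2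
        · exact ⟨0, fun h => absurd hp h⟩
        · have hne : x p.1 - x p.2 ≠ 0 := by
            intro h
            exact hcon' p hp (sub_eq_zero.mp h)
          have hpos : 0 < |x p.1 - x p.2| := abs_pos.mpr hne
          obtain ⟨n, hn⟩ := exists_pow_lt_of_lt_one hpos (by norm_num : (2:ℝ)⁻¹ < 1)
          refine ⟨n, fun _ h => ?_⟩
          rw [← inv_pow] at h
          linarith
      choose Np hNp using hchoice
      set Nstar := Finset.univ.sup Np with hNs
      obtain ⟨_, hx2⟩ := hx Nstar
      obtain ⟨p, hp⟩ := Set.mem_iUnion.mp hx2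
      obtain ⟨hpne, hple⟩ := Set.mem_iUnion.mp hp
      apply hNp p hpne
      calc |x p.1 - x p.2| ≤ ((2:ℝ)^Nstar)⁻¹ := hple
        _ ≤ ((2:ℝ)^(Np p))⁻¹ := by
            apply inv_anti₀ (by positivity)
            apply pow_le_pow_right₀ (by norm_num)
            exact Finset.le_sup (Finset.mem_univ p)
  -- per-N bound
  have hbound : ∀ N : ℕ, |∫ x in Set.univ.pi B', g x| ≤ ∫ x in E N, |g x| := by
    intro N
    set C : Fin m → Fin (2^N) → Set ℝ := fun j k => B' j ∩ dcell N (k:ℕ) with hC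
    have hCmeas : ∀ j k, MeasurableSet (C j k) := fun j k => (hB'meas j).inter (dcell_measurable _ _)
    have hCIcc : ∀ j k, C j k ⊆ Set.Icc (0:ℝ) 1 := fun j k => Set.inter_subset_left.trans (hB'Icc j)
    have hboxmeas : ∀ φ : Fin m → Fin (2^N),
        MeasurableSet (Set.univ.pi fun j => C j (φ j)) :=
      fun φ => MeasurableSet.univ_pi fun j => hCmeas j (φ j)
    have hboxint : ∀ φ : Fin m → Fin (2^N),
        IntegrableOn g (Set.univ.pi fun j => C j (φ j)) volume :=
      fun φ => hgint.mono_set (Set.pi_mono fun i _ => hCIcc i (φ i))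
    have hCdisj : ∀ (j : Fin m) {k l : Fin (2^N)}, k ≠ l → Disjoint (C j k) (C j l) := by
      intro j k l hkl
      have : ((k:ℕ) : ℕ) ≠ (l:ℕ) := fun h => hkl (Fin.ext h)
      exact Set.disjoint_of_subset Set.inter_subset_right Set.inter_subset_right
        (dcell_disjoint N this)
    -- decomposition
    have hdecomp : Set.univ.pi B' = ⋃ φ ∈ (Finset.univ : Finset (Fin m → Fin (2^N))),
        Set.univ.pi fun j => C j (φ j) := by
      ext x
      simp only [Set.mem_pi, Set.mem_univ, true_implies, Set.mem_iUnion, Finset.mem_univ,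
        Set.mem_iUnion, exists_true_left]
      constructor
      · intro hx
        have hx' : ∀ j, ∃ k : Fin (2^N), x j ∈ C j k := by
          intro j
          have := dcell_cover N (hB'sub j (hx j))
          obtain ⟨k, hk⟩ := Set.mem_iUnion.mp this
          exact ⟨k, hx j, hk⟩
        choose φ hφ using hx'
        exact ⟨φ, fun j => hφ j⟩
      · rintro ⟨φ, hφ⟩ j
        exact ((hφ j)).1
    have hpairwise : (↑(Finset.univ : Finset (Fin m → Fin (2^N))) :
        Set (Fin m → Fin (2^N))).Pairwise
          (Function.onFun Disjoint (fun φ => Set.univ.pi fun j => C j (φ j))) := by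
      intro φ _ ψ _ hne
      obtain ⟨j, hj⟩ := Function.ne_iff.mp hne
      refine Set.disjoint_left.mpr fun x hxφ hxψ => ?_
      exact Set.disjoint_left.mp (hCdisj j hj) (hxφ j trivial) (hxψ j trivial)
    have hsplit : ∫ x in Set.univ.pi B', g x
        = ∑ φ : Fin m → Fin (2^N), ∫ x in Set.univ.pi fun j => C j (φ j), g x := by
      rw [hdecomp, integral_biUnion_finset _ (fun φ _ => hboxmeas φ) hpairwise
        (fun φ _ => hboxint φ)]
    -- injective terms vanish
    have hinj : ∀ φ : Fin m → Fin (2^N), Function.Injective φ →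
        ∫ x in Set.univ.pi fun j => C j (φ j), g x = 0 := by
      intro φ hφ
      apply disjoint_pi_integral m g hgint hsymm hHg _ (fun j => hCmeas j (φ j))
        (fun j => hCIcc j (φ j))
      intro i j hij
      have : φ i ≠ φ j := fun h => hij (hφ h)
      exact Set.disjoint_of_subset Set.inter_subset_right Set.inter_subset_right
        (dcell_disjoint N (fun h => this (Fin.ext h)))
    set t := Finset.univ.filter (fun φ : Fin m → Fin (2^N) => ¬ Function.Injective φ) with ht
    have hsplit2 : ∫ x in Set.univ.pi B', g x
        = ∑ φ ∈ t, ∫ x in Set.univ.pi fun j => C j (φ j), g x := by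
      rw [hsplit]
      rw [← Finset.sum_filter_add_sum_filter_not Finset.univ
        (fun φ : Fin m → Fin (2^N) => Function.Injective φ)]
      rw [Finset.sum_congr rfl (fun φ hφ => hinj φ (Finset.mem_filter.mp hφ).2)]
      simp [ht]
    have hsplit3 : ∫ x in Set.univ.pi B', g x
        = ∫ x in ⋃ φ ∈ t, Set.univ.pi fun j => C j (φ j), g x := by
      rw [hsplit2, integral_biUnion_finset _ (fun φ _ => hboxmeas φ)
        (hpairwise.mono (Finset.coe_subset.mpr (Finset.filter_subset _ _)))
        (fun φ _ => hboxint φ)]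
    -- the union of noninjective boxes is inside E N
    have hUsub : (⋃ φ ∈ t, Set.univ.pi fun j => C j (φ j)) ⊆ E N := by
      intro x hx
      obtain ⟨φ, hφt, hxφ⟩ := Set.mem_iUnion₂.mp hx
      have hφni : ¬ Function.Injective φ := (Finset.mem_filter.mp hφt).2
      rw [Function.not_injective_iff] at hφni
      obtain ⟨i, j, hij, hne⟩ := hφni
      constructor
      · intro k _
        exact hCIcc k (φ k) (hxφ k trivial)
      · refine Set.mem_iUnion.mpr ⟨(i, j), Set.mem_iUnion.mpr ⟨hne, ?_⟩⟩
        have h1 : x i ∈ dcell N ((φ i : ℕ)) := (hxφ i trivial).2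
        have h2 : x j ∈ dcell N ((φ i : ℕ)) := by
          have := (hxφ j trivial).2
          rwa [← hij] at this
        exact dcell_diam N _ h1 h2
    calc |∫ x in Set.univ.pi B', g x|
        = |∫ x in ⋃ φ ∈ t, Set.univ.pi fun j => C j (φ j), g x| := by rw [hsplit3]
      _ ≤ ∫ x in ⋃ φ ∈ t, Set.univ.pi fun j => C j (φ j), |g x| := by
          rw [← Real.norm_eq_abs]
          refine (norm_integral_le_integral_norm _).trans ?_
          simp [Real.norm_eq_abs]
      _ ≤ ∫ x in E N, |g x| := by
          apply setIntegral_mono_set (hEint N)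
          · filter_upwards with x using abs_nonneg _
          · exact Filter.Eventually.of_forall fun x hx => hUsub hx
  -- conclusion
  have htend : Filter.Tendsto (fun N => ∫ x in E N, |g x|) Filter.atTop
      (nhds (∫ x in ⋂ N, E N, |g x|)) :=
    tendsto_setIntegral_of_antitone hEmeas hEanti ⟨0, hEint 0⟩
  have hzero : ∫ x in ⋂ N, E N, |g x| = 0 := by
    rw [Measure.restrict_eq_zero.mpr hInull]
    simp
  rw [hzero] at htend
  have hle : |∫ x in Set.univ.pi B', g x| ≤ 0 :=
    ge_of_tendsto htend (Filter.Eventually.of_forall hbound)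
  exact abs_nonpos_iff.mp hle

/-- **Lemma.** If `f : [0,1]^m → ℝ` is integrable and `∫_{A^m} f = 0` for every
measurable subset `A ⊆ [0,1]`, then the symmetrization of `f` vanishes almost
everywhere on `[0,1]^m`. -/
theorem stmt9 (m : ℕ) (hm : 1 ≤ m) (f : (Fin m → ℝ) → ℝ)
    (hf : IntegrableOn f (Set.univ.pi fun _ : Fin m => Set.Icc (0 : ℝ) 1) volume)
    (H : ∀ A : Set ℝ, MeasurableSet A → A ⊆ Set.Icc (0 : ℝ) 1 →
      ∫ x in Set.univ.pi fun _ : Fin m => A, f x = 0) :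
    ∀ᵐ x ∂((volume : Measure (Fin m → ℝ)).restrict
        (Set.univ.pi fun _ : Fin m => Set.Icc (0 : ℝ) 1)), symmetrize m f x = 0 := by
  classical
  set Q : Set (Fin m → ℝ) := Set.univ.pi fun _ : Fin m => Set.Icc (0 : ℝ) 1 with hQ
  set g : (Fin m → ℝ) → ℝ := symmetrize m f with hgdef
  -- integrability of each permuted copy
  have hQimage : ∀ σ : Equiv.Perm (Fin m), (fun x : Fin m → ℝ => x ∘ σ) '' Q = Q := by
    intro σ
    rw [hQ, perm_image m σ]
  have hcomp_int : ∀ σ : Equiv.Perm (Fin m), IntegrableOn (fun x => f (x ∘ σ)) Q volume := by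
    intro σ
    apply perm_integrableOn m σ f Q
    rw [hQimage σ]
    exact hf
  have hgQ : IntegrableOn g Q volume := by
    have : IntegrableOn (fun x => (m.factorial : ℝ)⁻¹ *
        ∑ σ : Equiv.Perm (Fin m), f (x ∘ σ)) Q volume := by
      apply Integrable.const_mul
      exact integrable_finset_sum _ (fun σ _ => hcomp_int σ)
    exact this
  -- symmetry of g
  have hsymm : ∀ (σ : Equiv.Perm (Fin m)) (x : Fin m → ℝ), g (x ∘ σ) = g x := by
    intro σ x
    rw [hgdef]
    show (m.factorial : ℝ)⁻¹ * ∑ τ : Equiv.Perm (Fin m), f ((x ∘ σ) ∘ τ)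
      = (m.factorial : ℝ)⁻¹ * ∑ τ : Equiv.Perm (Fin m), f (x ∘ τ)
    congr 1
    exact Fintype.sum_equiv (Equiv.mulLeft σ) _ _ (fun τ => rfl)
  -- the hypothesis transfers to g
  have hHg : ∀ A : Set ℝ, MeasurableSet A → A ⊆ Set.Icc (0 : ℝ) 1 →
      ∫ x in Set.univ.pi fun _ : Fin m => A, g x = 0 := by
    intro A hA hAsub
    have hpisub : (Set.univ.pi fun _ : Fin m => A) ⊆ Q :=
      Set.pi_mono fun i _ => hAsub
    have heach : ∀ σ : Equiv.Perm (Fin m),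
        ∫ x in Set.univ.pi fun _ : Fin m => A, f (x ∘ σ) = 0 := by
      intro σ
      rw [← perm_setIntegral m σ (fun _ => A) f]
      exact H A hA hAsub
    calc ∫ x in Set.univ.pi fun _ : Fin m => A, g x
        = ∫ x in Set.univ.pi fun _ : Fin m => A,
            ((m.factorial : ℝ)⁻¹ * ∑ σ : Equiv.Perm (Fin m), f (x ∘ σ)) := rfl
      _ = (m.factorial : ℝ)⁻¹ * ∫ x in Set.univ.pi fun _ : Fin m => A,
            (∑ σ : Equiv.Perm (Fin m), f (x ∘ σ)) := integral_const_mul _ _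
      _ = (m.factorial : ℝ)⁻¹ * ∑ σ : Equiv.Perm (Fin m),
            ∫ x in Set.univ.pi fun _ : Fin m => A, f (x ∘ σ) := by
          congr 1
          exact integral_finset_sum _ (fun σ _ => (hcomp_int σ).mono_set hpisub)
      _ = 0 := by
          rw [Finset.sum_congr rfl (fun σ _ => heach σ)]
          simp
  -- measure-theoretic conclusion via π-system
  set μ' := (volume : Measure (Fin m → ℝ)).restrict Q with hμ'
  have hQvol : volume Q = 1 := by
    rw [hQ, volume_pi_pi]
    simp
  haveI : IsFiniteMeasure μ' := ⟨by rw [hμ', Measure.restrict_apply_univ, hQvol]; exact ENNReal.one_lt_top⟩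
  have hgμ' : Integrable g μ' := hgQ
  set ν₁ := μ'.withDensity (fun x => ENNReal.ofReal (g x)) with hν₁
  set ν₂ := μ'.withDensity (fun x => ENNReal.ofReal (-g x)) with hν₂
  have hfin : ∀ (ρ : Measure (Fin m → ℝ)), Integrable g ρ →
      (∫⁻ x, ENNReal.ofReal (g x) ∂ρ < ⊤ ∧ ∫⁻ x, ENNReal.ofReal (-g x) ∂ρ < ⊤) := by
    intro ρ hερ
    constructor
    · refine lt_of_le_of_lt (lintegral_mono fun x => ?_) hερ.2
      exact Real.ofReal_le_enorm (g x)
    · refine lt_of_le_of_lt (lintegral_mono fun x => ?_) hερ.2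
      calc ENNReal.ofReal (-g x) ≤ ‖-g x‖₊ := Real.ofReal_le_enorm (-g x)
        _ = ‖g x‖₊ := by rw [nnnorm_neg]
  haveI : IsFiniteMeasure ν₁ := by
    constructor
    rw [hν₁, withDensity_apply _ MeasurableSet.univ, Measure.restrict_univ]
    exact (hfin μ' hgμ').1
  -- measures agree on boxes
  have hbox : ∀ s ∈ Set.pi Set.univ '' Set.pi Set.univ
      (fun _ : Fin m => {s : Set ℝ | MeasurableSet s}), ν₁ s = ν₂ s := by
    rintro s ⟨B, hB, rfl⟩
    have hBm : ∀ i, MeasurableSet (B i) := fun i => hB i trivial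
    have hmeas : MeasurableSet (Set.univ.pi B) := MeasurableSet.univ_pi hBm
    set B' : Fin m → Set ℝ := fun i => B i ∩ Set.Icc (0:ℝ) 1 with hB'
    have hres : μ'.restrict (Set.univ.pi B) = volume.restrict (Set.univ.pi B') := by
      rw [hμ', Measure.restrict_restrict hmeas]
      congr 1
      rw [hQ, hB', ← Set.pi_inter_distrib]
    have hint' : IntegrableOn g (Set.univ.pi B') volume :=
      hgQ.mono_set (Set.pi_mono fun i _ => Set.inter_subset_right)
    have hzero : ∫ x in Set.univ.pi B', g x = 0 :=
      box_integral m g hgQ hsymm hHg B' (fun i => (hBm i).inter measurableSet_Icc)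
        (fun i => Set.inter_subset_right)
    have hposneg := integral_eq_lintegral_pos_part_sub_lintegral_neg_part hint'
    rw [hzero] at hposneg
    have hfins := hfin (volume.restrict (Set.univ.pi B')) hint'
    have heq : ∫⁻ x, ENNReal.ofReal (g x) ∂(volume.restrict (Set.univ.pi B'))
        = ∫⁻ x, ENNReal.ofReal (-g x) ∂(volume.restrict (Set.univ.pi B')) := by
      have h1 := hfins.1.ne
      have h2 := hfins.2.ne
      apply (ENNReal.toReal_eq_toReal_iff' h1 h2).mp
      linarith [hposneg]
    rw [hν₁, hν₂, withDensity_apply _ hmeas, withDensity_apply _ hmeas, hres]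
    exact heq
  have huniv : ν₁ Set.univ = ν₂ Set.univ := by
    have := hbox (Set.univ.pi fun _ : Fin m => (Set.univ : Set ℝ))
      ⟨fun _ => Set.univ, fun i _ => by simp, rfl⟩
    rwa [Set.pi_univ] at this
  have hνeq : ν₁ = ν₂ := ext_of_generate_finite _ generateFrom_pi.symm isPiSystem_pi hbox huniv
  -- hence all set integrals vanish
  have hall : ∀ s, MeasurableSet s → μ' s < ⊤ → ∫ x in s, g x ∂μ' = 0 := by
    intro s hs _
    have hints : Integrable g (μ'.restrict s) := hgμ'.restrict
    have hposneg := integral_eq_lintegral_pos_part_sub_lintegral_neg_part hints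
    have h1 : ∫⁻ x, ENNReal.ofReal (g x) ∂(μ'.restrict s) = ν₁ s := by
      rw [hν₁, withDensity_apply _ hs]
    have h2 : ∫⁻ x, ENNReal.ofReal (-g x) ∂(μ'.restrict s) = ν₂ s := by
      rw [hν₂, withDensity_apply _ hs]
    rw [hposneg, h1, h2, hνeq]
    ring
  have hfinal : g =ᵐ[μ'] 0 := hgμ'.ae_eq_zero_of_forall_setIntegral_eq_zero hall
  filter_upwards [hfinal] with x hx
  simpa using hx
end

section
/- Let 1 ≤ d ≤ h be integers and let a be a real-valued function defined on the d-element subsets of {1,…,h+d}. Suppose that for every h-element subset J of {1,…,h+d}, the sum of a(I) over all d-element subsets I of J equals 0. Then a(I) = 0 for every d-element subset I of {1,…,h+d}. -/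
open Finset

lemma count_supersets {α : Type*} [DecidableEq α] (s I : Finset α) (k : ℕ)
    (hIs : I ⊆ s) (hIk : I.card ≤ k) :
    ((s.powersetCard k).filter (fun J => I ⊆ J)).card
      = (s.card - I.card).choose (k - I.card) := by
  rw [← Finset.card_sdiff_of_subset hIs, ← Finset.card_powersetCard (k - I.card) (s \ I)]
  apply Finset.card_bij' (fun J _ => J \ I) (fun B _ => B ∪ I)
  · intro J hJ
    simp only [mem_filter, mem_powersetCard] at hJ
    obtain ⟨⟨hJs, hJk⟩, hIJ⟩ := hJ
    rw [mem_powersetCard]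
    exact ⟨Finset.sdiff_subset_sdiff hJs le_rfl, by rw [card_sdiff_of_subset hIJ, hJk]⟩
  · intro B hB
    rw [mem_powersetCard] at hB
    obtain ⟨hBs, hBk⟩ := hB
    rw [Finset.subset_sdiff] at hBs
    simp only [mem_filter, mem_powersetCard]
    refine ⟨⟨Finset.union_subset hBs.1 hIs, ?_⟩, Finset.subset_union_right⟩
    rw [Finset.card_union_of_disjoint hBs.2, hBk, Nat.sub_add_cancel hIk]
  · intro J hJ
    simp only [mem_filter] at hJ
    exact Finset.sdiff_union_of_subset hJ.2
  · intro B hB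
    rw [mem_powersetCard, Finset.subset_sdiff] at hB
    exact Finset.union_sdiff_cancel_right hB.1.2

lemma sum_neg_one_pow_card_real {α : Type*} [DecidableEq α] (p : Finset α) :
    (∑ K ∈ p.powerset, (-1 : ℝ) ^ K.card) = if p = ∅ then 1 else 0 := by
  have := Finset.sum_powerset_neg_one_pow_card (x := p)
  have h2 : ((∑ K ∈ p.powerset, (-1 : ℤ) ^ K.card : ℤ) : ℝ)
      = ∑ K ∈ p.powerset, (-1 : ℝ) ^ K.card := by push_cast; rfl
  rw [← h2, this]
  split <;> simp

/-- **Lemma (Gottlieb).** Let `1 ≤ d ≤ h` and let `a` assign a real number to each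
`d`-element subset of `{1,…,h+d}`. If for every `h`-element subset `J` of `{1,…,h+d}`
the sum of `a(I)` over all `d`-element subsets `I ⊆ J` is `0`, then `a(I) = 0` for
every `d`-element subset `I`. -/
theorem stmt14 (d h : ℕ) (hd : 1 ≤ d) (hdh : d ≤ h)
    (a : Finset (Fin (h + d)) → ℝ)
    (H : ∀ J : Finset (Fin (h + d)), J.card = h →
      ∑ I ∈ J.powersetCard d, a I = 0) :
    ∀ I : Finset (Fin (h + d)), I.card = d → a I = 0 := by
  -- Claim A: for every K with |K| ≤ d, the sum of a over d-sets avoiding K is 0.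
  have claimA : ∀ K : Finset (Fin (h + d)), K.card ≤ d →
      ∑ I ∈ (univ \ K).powersetCard d, a I = 0 := by
    intro K hK
    have hKcard : (univ \ K).card = h + d - K.card := by
      rw [card_sdiff_of_subset (subset_univ K), card_univ, Fintype.card_fin]
    have h0 : ∑ J ∈ (univ \ K).powersetCard h, ∑ I ∈ J.powersetCard d, a I = 0 :=
      Finset.sum_eq_zero fun J hJ => H J (Finset.mem_powersetCard.1 hJ).2
    rw [Finset.sum_comm' (s' := fun I => ((univ \ K).powersetCard h).filter (fun J => I ⊆ J))
      (t' := (univ \ K).powersetCard d) ?_] at h0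
    · have hcount : ∀ I ∈ (univ \ K).powersetCard d,
          ∑ J ∈ ((univ \ K).powersetCard h).filter (fun J => I ⊆ J), a I
            = ((h + d - K.card - d).choose (h - d) : ℝ) * a I := by
        intro I hI
        rw [Finset.mem_powersetCard] at hI
        rw [Finset.sum_const, count_supersets _ _ _ hI.1 (by rw [hI.2]; exact hdh), hI.2, hKcard]
        simp [nsmul_eq_mul]
      rw [Finset.sum_congr rfl hcount, ← Finset.mul_sum] at h0
      have hc : ((h + d - K.card - d).choose (h - d) : ℝ) ≠ 0 := by
        have : h - d ≤ h + d - K.card - d := by omega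
        exact_mod_cast (Nat.choose_pos this).ne'
      exact (mul_eq_zero.1 h0).resolve_left hc
    · intro J I
      simp only [Finset.mem_powersetCard, Finset.mem_filter, Finset.mem_powersetCard]
      constructor
      · rintro ⟨⟨hJs, hJh⟩, hIJ, hId⟩
        exact ⟨⟨⟨hJs, hJh⟩, hIJ⟩, hIJ.trans hJs, hId⟩
      · rintro ⟨⟨⟨hJs, hJh⟩, hIJ⟩, _, hId⟩
        exact ⟨⟨hJs, hJh⟩, hIJ, hId⟩
  -- Claim B: the alternating sum isolates a I₀.
  intro I₀ hI₀
  have hT0 : ∑ K ∈ I₀.powerset, (-1 : ℝ) ^ K.card * ∑ I ∈ (univ \ K).powersetCard d, a I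
      = 0 := by
    apply Finset.sum_eq_zero
    intro K hK
    rw [claimA K ((Finset.card_le_card (Finset.mem_powerset.1 hK)).trans hI₀.le), mul_zero]
  have hswap : ∑ K ∈ I₀.powerset, (-1 : ℝ) ^ K.card * ∑ I ∈ (univ \ K).powersetCard d, a I
      = ∑ I ∈ (univ : Finset (Fin (h + d))).powersetCard d,
          ∑ K ∈ (I₀ \ I).powerset, (-1 : ℝ) ^ K.card * a I := by
    simp_rw [Finset.mul_sum]
    apply Finset.sum_comm' (s' := fun I => (I₀ \ I).powerset)
      (t' := (univ : Finset (Fin (h + d))).powersetCard d)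
    intro K I
    simp only [Finset.mem_powerset, Finset.mem_powersetCard, Finset.subset_sdiff]
    constructor
    · rintro ⟨h1, ⟨h2, h3⟩, h4⟩; exact ⟨⟨h1, h3.symm⟩, h2, h4⟩
    · rintro ⟨⟨h1, h3⟩, h2, h4⟩; exact ⟨h1, ⟨h2, h3.symm⟩, h4⟩
  rw [hswap] at hT0
  have heval : ∑ I ∈ (univ : Finset (Fin (h + d))).powersetCard d,
      ∑ K ∈ (I₀ \ I).powerset, (-1 : ℝ) ^ K.card * a I = a I₀ := by
    have hterm : ∀ I ∈ (univ : Finset (Fin (h + d))).powersetCard d,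
        ∑ K ∈ (I₀ \ I).powerset, (-1 : ℝ) ^ K.card * a I
          = (if I₀ \ I = ∅ then 1 else 0) * a I := by
      intro I _
      rw [← Finset.sum_mul, sum_neg_one_pow_card_real]
    rw [Finset.sum_congr rfl hterm]
    rw [Finset.sum_eq_single_of_mem I₀
      (Finset.mem_powersetCard.2 ⟨Finset.subset_univ I₀, hI₀⟩)]
    · simp
    · intro I hI hne
      rw [Finset.mem_powersetCard] at hI
      have : ¬ I₀ \ I = ∅ := by
        intro hcon
        rw [Finset.sdiff_eq_empty_iff_subset] at hcon
        exact hne (Finset.eq_of_subset_of_card_le hcon (by rw [hI.2, hI₀])).symm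
      rw [if_neg this, zero_mul]
  rw [heval] at hT0
  exact hT0
end

section
/- Let F be a finite simple graph with vertex set {1,…,k} and e(F) > 0, let 0 < p ≤ 1, and let W be a graphon. If Ψ_{F,W}(x₁,…,x_k) = p^{e(F)} for almost every (x₁,…,x_k) ∈ [0,1]^k (with respect to Lebesgue measure), then W(x,y) = p for almost every (x,y) ∈ [0,1]². -/
open MeasureTheory

open scoped Classical in
/-- `Ψ_{F,W}(x₁,…,x_k) = ∏_{ij ∈ E(F)} W(x_i, x_j)`, the product being over the
edges of `F` (each edge taken once, as a pair `i < j`). -/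
noncomputable def psi {k : ℕ} (F : SimpleGraph (Fin k)) (W : ℝ → ℝ → ℝ)
    (x : Fin k → ℝ) : ℝ :=
  ∏ e ∈ Finset.univ.filter (fun e : Fin k × Fin k => e.1 < e.2 ∧ F.Adj e.1 e.2),
    W (x e.1) (x e.2)

/-- The number of edges of a finite simple graph on `Fin k`. -/
noncomputable def edgeCount {k : ℕ} (F : SimpleGraph (Fin k)) : ℕ :=
  Set.ncard {e : Fin k × Fin k | e.1 < e.2 ∧ F.Adj e.1 e.2}

/-- `W : ℝ → ℝ → ℝ` is a graphon (on `[0,1]²`): Lebesgue measurable, symmetric,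
with values in `[0,1]`. -/
def IsGraphon (W : ℝ → ℝ → ℝ) : Prop :=
  NullMeasurable (fun z : ℝ × ℝ => W z.1 z.2) (volume : Measure (ℝ × ℝ)) ∧
    (∀ x y : ℝ, W x y = W y x) ∧ ∀ x y : ℝ, W x y ∈ Set.Icc (0 : ℝ) 1

/-!
Since every factor of `Ψ` lies in `[0,1]`, `Ψ = q := p^{e(F)}` a.e. forces every edge factor
`W(x_i, x_j) ≥ q` a.e. Hence `g := log W - log p` is bounded and `∑_{ij ∈ E(F)} g(x_i, x_j) = 0`
a.e. Integrating the square of this sum, every cross term `∫ g(x_i, x_j) g(x_k, x_l)` is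
nonnegative: it equals `(∫ g)²` when the two edges are disjoint, and `∫ (∫ g(u, v) dv)² du` when
they share a vertex (`g` being symmetric). As the cross terms sum to `0`, `∫ g² = 0`, i.e. `W = p`
a.e.
-/

open ProbabilityTheory

namespace MeasureTheory.MeasurePreserving

variable {α β : Type*} [MeasurableSpace α] [MeasurableSpace β] {μ : Measure α} {ν : Measure β}
  {f : α → β}

theorem ae_of_ae_comp (hf : MeasurePreserving f μ ν) {s : Set β} (hs : NullMeasurableSet s ν)
    (h : ∀ᵐ x ∂μ, f x ∈ s) : ∀ᵐ y ∂ν, y ∈ s := by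
  rw [ae_iff] at h ⊢
  exact (hf.measure_preimage hs.compl).symm.trans h

theorem integral_comp_of_aestronglyMeasurable {E : Type*} [NormedAddCommGroup E]
    [NormedSpace ℝ E] (hf : MeasurePreserving f μ ν) {g : β → E}
    (hg : AEStronglyMeasurable g ν) : ∫ x, g (f x) ∂μ = ∫ y, g y ∂ν := by
  rw [← hf.map_eq] at hg ⊢
  exact (integral_map hf.aemeasurable hg).symm

end MeasureTheory.MeasurePreserving

theorem ProbabilityTheory.IndepFun.measurePreserving_prodMk {Ω α β : Type*}
    [MeasurableSpace Ω] [MeasurableSpace α] [MeasurableSpace β] {P : Measure Ω}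
    [IsFiniteMeasure P] {μ : Measure α} {ν : Measure β} {X : Ω → α} {Y : Ω → β}
    (h : IndepFun X Y P) (hX : MeasurePreserving X P μ) (hY : MeasurePreserving Y P ν) :
    MeasurePreserving (fun ω => (X ω, Y ω)) P (μ.prod ν) :=
  ⟨hX.measurable.prodMk hY.measurable, by
    rw [(indepFun_iff_map_prod_eq_prod_map_map hX.aemeasurable hY.aemeasurable).1 h,
      hX.map_eq, hY.map_eq]⟩

section PiCoordinates

variable {ι α : Type*} [Fintype ι] [MeasurableSpace α] (μ : Measure α) [IsProbabilityMeasure μ]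

theorem iIndepFun_eval_pi : iIndepFun (fun i (x : ι → α) => x i) (Measure.pi fun _ => μ) :=
  iIndepFun_pi (X := fun _ => id) fun _ => aemeasurable_id

theorem measurePreserving_evalPair {a b : ι} (hab : a ≠ b) :
    MeasurePreserving (fun x : ι → α => (x a, x b)) (Measure.pi fun _ => μ) (μ.prod μ) :=
  ((iIndepFun_eval_pi μ).indepFun hab).measurePreserving_prodMk
    (measurePreserving_eval _ a) (measurePreserving_eval _ b)

theorem measurePreserving_evalPair_prodMk_evalPair {a b c d : ι} (hab : a ≠ b) (hcd : c ≠ d)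
    (hac : a ≠ c) (had : a ≠ d) (hbc : b ≠ c) (hbd : b ≠ d) :
    MeasurePreserving (fun x : ι → α => ((x a, x b), (x c, x d))) (Measure.pi fun _ => μ)
      ((μ.prod μ).prod (μ.prod μ)) :=
  ((iIndepFun_eval_pi μ).indepFun_prodMk_prodMk (fun i => measurable_pi_apply i)
      a b c d hac had hbc hbd).measurePreserving_prodMk
    (measurePreserving_evalPair μ hab) (measurePreserving_evalPair μ hcd)

theorem measurePreserving_eval_prodMk_evalPair {v a b : ι} (hva : v ≠ a) (hvb : v ≠ b)
    (hab : a ≠ b) :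
    MeasurePreserving (fun x : ι → α => (x v, (x a, x b))) (Measure.pi fun _ => μ)
      (μ.prod (μ.prod μ)) :=
  ((iIndepFun_eval_pi μ).indepFun_prodMk (fun i => measurable_pi_apply i)
      a b v hva.symm hvb.symm).symm.measurePreserving_prodMk
    (measurePreserving_eval _ v) (measurePreserving_evalPair μ hab)

end PiCoordinates

section FiberSquares

variable {α β : Type*} [MeasurableSpace α] [MeasurableSpace β] {μ : Measure α} {ν : Measure β}
  [IsProbabilityMeasure μ] [IsProbabilityMeasure ν] {f : α × β → ℝ}

theorem integrable_fiber_mul (hf : AEStronglyMeasurable f (μ.prod ν)) {C : ℝ}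
    (hC : ∀ z, ‖f z‖ ≤ C) :
    Integrable (fun w : α × β × β => f (w.1, w.2.1) * f (w.1, w.2.2)) (μ.prod (ν.prod ν)) := by
  have h₁ : MeasurePreserving (fun w : α × β × β => (w.1, w.2.1)) (μ.prod (ν.prod ν))
      (μ.prod ν) := (MeasurePreserving.id μ).prod measurePreserving_fst
  have h₂ : MeasurePreserving (fun w : α × β × β => (w.1, w.2.2)) (μ.prod (ν.prod ν))
      (μ.prod ν) := (MeasurePreserving.id μ).prod measurePreserving_snd
  refine .of_bound ((hf.comp_measurePreserving h₁).mul (hf.comp_measurePreserving h₂)) (C * C)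
    (ae_of_all _ fun w => ?_)
  rw [norm_mul]
  exact mul_le_mul (hC _) (hC _) (norm_nonneg _) ((norm_nonneg (f (w.1, w.2.1))).trans (hC _))

theorem integral_fiber_mul_nonneg (hf : AEStronglyMeasurable f (μ.prod ν)) {C : ℝ}
    (hC : ∀ z, ‖f z‖ ≤ C) :
    0 ≤ ∫ w : α × β × β, f (w.1, w.2.1) * f (w.1, w.2.2) ∂(μ.prod (ν.prod ν)) := by
  rw [integral_prod _ (integrable_fiber_mul hf hC)]
  refine integral_nonneg fun u => ?_
  rw [integral_prod_mul (fun s => f (u, s)) (fun t => f (u, t))]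
  exact mul_self_nonneg _

end FiberSquares

section EdgeProducts

variable {ι α : Type*} [Fintype ι] [MeasurableSpace α] {μ : Measure α} [IsProbabilityMeasure μ]
  {G : α × α → ℝ}

theorem integrable_evalPair_mul_evalPair (hG : AEStronglyMeasurable G (μ.prod μ)) {C : ℝ}
    (hC : ∀ z, ‖G z‖ ≤ C) {a b c d : ι} (hab : a ≠ b) (hcd : c ≠ d) :
    Integrable (fun x => G (x a, x b) * G (x c, x d)) (Measure.pi fun _ => μ) :=
  .of_bound ((hG.comp_measurePreserving (measurePreserving_evalPair μ hab)).mul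
      (hG.comp_measurePreserving (measurePreserving_evalPair μ hcd))) (C * C)
    (ae_of_all _ fun x => by
      rw [norm_mul]
      exact mul_le_mul (hC _) (hC _) (norm_nonneg _) ((norm_nonneg (G (x a, x b))).trans (hC _)))

theorem integral_evalPair_mul_evalPair_nonneg_of_disjoint
    (hG : AEStronglyMeasurable G (μ.prod μ)) {a b c d : ι} (hab : a ≠ b) (hcd : c ≠ d)
    (hac : a ≠ c) (had : a ≠ d) (hbc : b ≠ c) (hbd : b ≠ d) :
    0 ≤ ∫ x, G (x a, x b) * G (x c, x d) ∂(Measure.pi fun _ => μ) := by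
  have hmp := measurePreserving_evalPair_prodMk_evalPair μ hab hcd hac had hbc hbd
  rw [hmp.integral_comp_of_aestronglyMeasurable (g := fun w => G w.1 * G w.2)
    ((hG.comp_measurePreserving measurePreserving_fst).mul
      (hG.comp_measurePreserving measurePreserving_snd)), integral_prod_mul]
  exact mul_self_nonneg _

theorem integral_evalPair_mul_evalPair_nonneg_of_common
    (hG : AEStronglyMeasurable G (μ.prod μ)) {C : ℝ} (hC : ∀ z, ‖G z‖ ≤ C) {v a b : ι}
    (hva : v ≠ a) (hvb : v ≠ b) (hab : a ≠ b) :
    0 ≤ ∫ x, G (x v, x a) * G (x v, x b) ∂(Measure.pi fun _ => μ) := by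
  rw [(measurePreserving_eval_prodMk_evalPair μ hva hvb hab).integral_comp_of_aestronglyMeasurable
    (g := fun w => G (w.1, w.2.1) * G (w.1, w.2.2)) (integrable_fiber_mul hG hC).1]
  exact integral_fiber_mul_nonneg hG hC

theorem integral_evalPair_mul_evalPair_nonneg (hG : AEStronglyMeasurable G (μ.prod μ)) {C : ℝ}
    (hC : ∀ z, ‖G z‖ ≤ C) (hsymm : ∀ u v, G (u, v) = G (v, u)) {a b c d : ι} (hab : a ≠ b)
    (hcd : c ≠ d) : 0 ≤ ∫ x, G (x a, x b) * G (x c, x d) ∂(Measure.pi fun _ => μ) := by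
  have common {v a b : ι} (hva : v ≠ a) (hvb : v ≠ b) (hab : a ≠ b) :=
    integral_evalPair_mul_evalPair_nonneg_of_common (μ := μ) hG hC hva hvb hab
  rcases eq_or_ne a c with rfl | hac
  · rcases eq_or_ne b d with rfl | hbd
    · exact integral_nonneg fun x => mul_self_nonneg _
    · exact common hab hcd hbd
  rcases eq_or_ne a d with rfl | had
  · rcases eq_or_ne b c with rfl | hbc
    · refine (integral_nonneg fun x => mul_self_nonneg (G (x a, x b))).trans_eq
        (integral_congr_ae (ae_of_all _ fun x => ?_))
      simp only [hsymm (x b)]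
    · convert common hab hac hbc using 4 with x
      exact hsymm _ _
  rcases eq_or_ne b c with rfl | hbc
  · convert common hab.symm hcd had using 4 with x
    exact hsymm _ _
  rcases eq_or_ne b d with rfl | hbd
  · convert common hab.symm hcd.symm hac using 4 with x
    · exact hsymm _ _
    · exact hsymm _ _
  exact integral_evalPair_mul_evalPair_nonneg_of_disjoint hG hab hcd hac had hbc hbd

end EdgeProducts

theorem ae_eq_zero_of_sum_eq_zero_of_integral_mul_nonneg {ι Ω : Type*} [MeasurableSpace Ω]
    {P : Measure Ω} {s : Finset ι} {g : ι → Ω → ℝ}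
    (hint : ∀ i ∈ s, ∀ j ∈ s, Integrable (fun ω => g i ω * g j ω) P)
    (hnonneg : ∀ i ∈ s, ∀ j ∈ s, 0 ≤ ∫ ω, g i ω * g j ω ∂P)
    (hsum : ∀ᵐ ω ∂P, ∑ i ∈ s, g i ω = 0) {i : ι} (hi : i ∈ s) : ∀ᵐ ω ∂P, g i ω = 0 := by
  have htotal : ∑ i ∈ s, ∑ j ∈ s, ∫ ω, g i ω * g j ω ∂P = 0 := calc
    _ = ∫ ω, (∑ i ∈ s, g i ω) * ∑ j ∈ s, g j ω ∂P := by
      simp_rw [Finset.sum_mul_sum]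
      rw [integral_finsetSum _ fun i hi => integrable_finsetSum _ (hint i hi)]
      exact Finset.sum_congr rfl fun i hi => (integral_finsetSum _ (hint i hi)).symm
    _ = 0 := integral_eq_zero_of_ae (hsum.mono fun ω h => by simp [h])
  have hii : ∫ ω, g i ω * g i ω ∂P = 0 :=
    (Finset.sum_eq_zero_iff_of_nonneg (hnonneg i hi)).1
      ((Finset.sum_eq_zero_iff_of_nonneg fun j hj => Finset.sum_nonneg (hnonneg j hj)).1
        htotal i hi) i hi
  filter_upwards [(integral_eq_zero_iff_of_nonneg (fun ω => mul_self_nonneg (g i ω))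
    (hint i hi i hi)).1 hii] with ω hω
  exact mul_self_eq_zero.1 hω

theorem Finset.prod_le_of_mem_of_le_one {ι R : Type*} [CommMonoidWithZero R] [PartialOrder R]
    [ZeroLEOneClass R] [PosMulMono R] {s : Finset ι} {f : ι → R} (h0 : ∀ j ∈ s, 0 ≤ f j)
    (h1 : ∀ j ∈ s, f j ≤ 1) {i : ι} (hi : i ∈ s) : ∏ j ∈ s, f j ≤ f i := by
  classical
  rw [← Finset.mul_prod_erase s f hi]
  exact mul_le_of_le_one_right (h0 i hi) (Finset.prod_le_one
    (fun j hj => h0 j (Finset.mem_of_mem_erase hj)) fun j hj => h1 j (Finset.mem_of_mem_erase hj))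

theorem Real.abs_log_max_le {t q : ℝ} (ht : t ≤ 1) (hq0 : 0 < q) (hq1 : q ≤ 1) :
    |Real.log (max t q)| ≤ -Real.log q := by
  rw [abs_of_nonpos (Real.log_nonpos (hq0.le.trans (le_max_right _ _)) (max_le ht hq1)),
    neg_le_neg_iff]
  exact Real.log_le_log hq0 (le_max_right _ _)

open scoped Classical in
noncomputable def edgePairs {k : ℕ} (F : SimpleGraph (Fin k)) : Finset (Fin k × Fin k) :=
  Finset.univ.filter fun e => e.1 < e.2 ∧ F.Adj e.1 e.2

section Graphon

variable {k : ℕ} {F : SimpleGraph (Fin k)}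

theorem psi_eq_prod_edgePairs (W : ℝ → ℝ → ℝ) (x : Fin k → ℝ) :
    psi F W x = ∏ e ∈ edgePairs F, W (x e.1) (x e.2) := rfl

theorem card_edgePairs : (edgePairs F).card = edgeCount F := by
  rw [edgeCount, ← Set.ncard_coe_finset]
  congr
  ext
  simp [edgePairs]

theorem fst_ne_snd_of_mem_edgePairs {e : Fin k × Fin k} (he : e ∈ edgePairs F) : e.1 ≠ e.2 := by
  classical
  exact (Finset.mem_filter.1 he).2.1.ne

theorem le_of_psi_eq {W : ℝ → ℝ → ℝ} (hW01 : ∀ x y, W x y ∈ Set.Icc (0 : ℝ) 1)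
    {x : Fin k → ℝ} {c : ℝ} (hx : psi F W x = c) {e : Fin k × Fin k} (he : e ∈ edgePairs F) :
    c ≤ W (x e.1) (x e.2) := by
  rw [← hx, psi_eq_prod_edgePairs]
  exact Finset.prod_le_of_mem_of_le_one (fun _ _ => (hW01 _ _).1) (fun _ _ => (hW01 _ _).2) he

theorem sum_log_sub_log_eq_zero_of_psi_eq {W : ℝ → ℝ → ℝ} {x : Fin k → ℝ} {p : ℝ}
    (hx : psi F W x = p ^ edgeCount F) (hpos : ∀ e ∈ edgePairs F, 0 < W (x e.1) (x e.2)) :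
    ∑ e ∈ edgePairs F, (Real.log (W (x e.1) (x e.2)) - Real.log p) = 0 := by
  rw [Finset.sum_sub_distrib, ← Real.log_prod fun e he => (hpos e he).ne', ← psi_eq_prod_edgePairs,
    hx, Finset.sum_const, card_edgePairs, nsmul_eq_mul, Real.log_pow, sub_self]

theorem ae_eq_of_psi_ae_eq (μ : Measure ℝ) [IsProbabilityMeasure μ] (hF : 0 < edgeCount F)
    {p : ℝ} (hp0 : 0 < p) (hp1 : p ≤ 1) {W : ℝ → ℝ → ℝ}
    (hWm : AEMeasurable (fun z : ℝ × ℝ => W z.1 z.2) (μ.prod μ))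
    (hsymm : ∀ x y, W x y = W y x) (hW01 : ∀ x y, W x y ∈ Set.Icc (0 : ℝ) 1)
    (hae : ∀ᵐ x ∂(Measure.pi fun _ : Fin k => μ), psi F W x = p ^ edgeCount F) :
    ∀ᵐ z ∂(μ.prod μ), W z.1 z.2 = p := by
  set q := p ^ edgeCount F
  have hq0 : 0 < q := pow_pos hp0 _
  have hq1 : q ≤ 1 := pow_le_one₀ hp0.le hp1
  have hfactor : ∀ᵐ x ∂(Measure.pi fun _ : Fin k => μ),
      ∀ e ∈ edgePairs F, q ≤ W (x e.1) (x e.2) := by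
    filter_upwards [hae] with x hx e he
    exact le_of_psi_eq hW01 hx he
  -- Clamping at `q` changes nothing a.e. but keeps the logarithm bounded everywhere.
  set G : ℝ × ℝ → ℝ := fun z => Real.log (max (W z.1 z.2) q) - Real.log p
  have hGm : AEStronglyMeasurable G (μ.prod μ) :=
    ((Real.measurable_log.comp_aemeasurable (hWm.max aemeasurable_const)).sub_const _)
      |>.aestronglyMeasurable
  have hGb : ∀ z, ‖G z‖ ≤ -Real.log q + |Real.log p| := fun z =>
    (abs_sub _ _).trans (add_le_add (Real.abs_log_max_le (hW01 _ _).2 hq0 hq1) le_rfl)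
  have hGsymm : ∀ u v, G (u, v) = G (v, u) := fun u v => by simp only [G, hsymm u v]
  have hsum : ∀ᵐ x ∂(Measure.pi fun _ : Fin k => μ),
      ∑ e ∈ edgePairs F, G (x e.1, x e.2) = 0 := by
    filter_upwards [hae, hfactor] with x hx hxq
    rw [← sum_log_sub_log_eq_zero_of_psi_eq hx fun e he => hq0.trans_le (hxq e he)]
    exact Finset.sum_congr rfl fun e he => by simp only [G, max_eq_left (hxq e he)]
  obtain ⟨e, he⟩ : (edgePairs F).Nonempty := Finset.card_pos.1 (card_edgePairs.symm ▸ hF)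
  have hG0 : ∀ᵐ x ∂(Measure.pi fun _ : Fin k => μ), G (x e.1, x e.2) = 0 :=
    ae_eq_zero_of_sum_eq_zero_of_integral_mul_nonneg
      (fun e he f hf => integrable_evalPair_mul_evalPair hGm hGb
        (fst_ne_snd_of_mem_edgePairs he) (fst_ne_snd_of_mem_edgePairs hf))
      (fun e he f hf => integral_evalPair_mul_evalPair_nonneg hGm hGb hGsymm
        (fst_ne_snd_of_mem_edgePairs he) (fst_ne_snd_of_mem_edgePairs hf))
      hsum he
  refine (measurePreserving_evalPair μ (fst_ne_snd_of_mem_edgePairs he)).ae_of_ae_comp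
    (s := {z | W z.1 z.2 = p}) (hWm.nullMeasurable (measurableSet_singleton p)) ?_
  filter_upwards [hG0, hfactor] with x hx hxq
  simp only [G, max_eq_left (hxq e he), sub_eq_zero] at hx
  exact Real.log_injOn_pos (hq0.trans_le (hxq e he)) hp0 hx

end Graphon

/-- **Lemma.** Let `F` be a graph on `{1,…,k}` with `e(F) > 0`, let `0 < p ≤ 1` and
let `W` be a graphon. If `Ψ_{F,W} = p^{e(F)}` a.e. on `[0,1]^k`, then `W = p` a.e.
on `[0,1]²`. -/
theorem stmt16 (k : ℕ) (F : SimpleGraph (Fin k)) (hF : 0 < edgeCount F)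
    (p : ℝ) (hp0 : 0 < p) (hp1 : p ≤ 1)
    (W : ℝ → ℝ → ℝ) (hW : IsGraphon W)
    (hae : ∀ᵐ x ∂((volume : Measure (Fin k → ℝ)).restrict
        (Set.univ.pi fun _ : Fin k => Set.Icc (0 : ℝ) 1)),
      psi F W x = p ^ edgeCount F) :
    ∀ᵐ z ∂((volume : Measure (ℝ × ℝ)).restrict
        (Set.Icc (0 : ℝ) 1 ×ˢ Set.Icc (0 : ℝ) 1)), W z.1 z.2 = p := by
  have : IsProbabilityMeasure (volume.restrict (Set.Icc (0 : ℝ) 1)) := ⟨by simp⟩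
  have hsquare : (volume : Measure (ℝ × ℝ)).restrict (Set.Icc (0 : ℝ) 1 ×ˢ Set.Icc (0 : ℝ) 1) =
      (volume.restrict (Set.Icc (0 : ℝ) 1)).prod (volume.restrict (Set.Icc (0 : ℝ) 1)) := by
    rw [Measure.volume_eq_prod, Measure.prod_restrict]
  have hWm := hW.1.aemeasurable.restrict (s := Set.Icc (0 : ℝ) 1 ×ˢ Set.Icc (0 : ℝ) 1)
  rw [volume_pi, Measure.restrict_pi_pi] at hae
  rw [hsquare] at hWm ⊢
  exact ae_eq_of_psi_ae_eq _ hF hp0 hp1 hWm hW.2.1 hW.2.2 hae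
end

section
/- Let F be a finite simple graph with vertex set {1,…,k} and e(F) > 0, let 0 < p ≤ 1, and let W be a graphon. If the symmetrization Ψ̃_{F,W} satisfies Ψ̃_{F,W}(x₁,…,x_k) = p^{e(F)} for every (x₁,…,x_k) ∈ [0,1]^k, then W(x,y) = p for every (x,y) ∈ [0,1]². -/
open MeasureTheory

/-- The symmetrization `Ψ̃_{F,W}` of `Ψ_{F,W}`. -/
noncomputable def psiSymm {k : ℕ} (F : SimpleGraph (Fin k)) (W : ℝ → ℝ → ℝ)
    (x : Fin k → ℝ) : ℝ :=
  (k.factorial : ℝ)⁻¹ * ∑ σ : Equiv.Perm (Fin k), psi F W (x ∘ σ)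

open scoped Classical

/-- **Lemma.** Let `F` be a graph on `{1,…,k}` with `e(F) > 0`, let `0 < p ≤ 1` and
let `W` be a graphon. If `Ψ̃_{F,W} = p^{e(F)}` everywhere on `[0,1]^k`, then
`W = p` everywhere on `[0,1]²`. -/
theorem stmt17 (k : ℕ) (F : SimpleGraph (Fin k)) (hF : 0 < edgeCount F)
    (p : ℝ) (hp0 : 0 < p) (hp1 : p ≤ 1)
    (W : ℝ → ℝ → ℝ) (hW : IsGraphon W)
    (hpt : ∀ x : Fin k → ℝ, (∀ i, x i ∈ Set.Icc (0 : ℝ) 1) →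
      psiSymm F W x = p ^ edgeCount F) :
    ∀ x ∈ Set.Icc (0 : ℝ) 1, ∀ y ∈ Set.Icc (0 : ℝ) 1, W x y = p := by
  obtain ⟨-, hWs, hWm⟩ := hW
  set E : Finset (Fin k × Fin k) :=
    Finset.univ.filter (fun e : Fin k × Fin k => e.1 < e.2 ∧ F.Adj e.1 e.2) with hE
  have hpsi : ∀ v : Fin k → ℝ, psi F W v = ∏ e ∈ E, W (v e.1) (v e.2) := fun v => rfl
  have hcard : edgeCount F = E.card := by
    rw [edgeCount, ← Set.ncard_coe_finset]
    congr 1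
    ext e
    simp [hE]
  have hfac : (k.factorial : ℝ) ≠ 0 := Nat.cast_ne_zero.mpr k.factorial_ne_zero
  have hEne : E.card ≠ 0 := by omega
  -- symmetrization of a "symmetric enough" point: reduce hpt to a sum identity
  have hsum : ∀ v : Fin k → ℝ, (∀ i, v i ∈ Set.Icc (0 : ℝ) 1) →
      ∑ σ : Equiv.Perm (Fin k), psi F W (v ∘ σ) = (k.factorial : ℝ) * p ^ E.card := by
    intro v hv
    have h := hpt v hv
    rw [psiSymm] at h
    rw [← hcard]
    field_simp at h
    linarith [h]
  -- diagonal values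
  have hdiag : ∀ t ∈ Set.Icc (0 : ℝ) 1, W t t = p := by
    intro t ht
    have h := hsum (fun _ => t) (fun _ => ht)
    have h2 : ∀ σ : Equiv.Perm (Fin k), psi F W ((fun _ => t) ∘ σ) = (W t t) ^ E.card := by
      intro σ
      rw [show ((fun _ => t) ∘ σ) = (fun _ : Fin k => t) from rfl, hpsi, Finset.prod_const]
    rw [Finset.sum_congr rfl (fun σ _ => h2 σ), Finset.sum_const, Finset.card_univ,
      Fintype.card_perm, Fintype.card_fin, nsmul_eq_mul] at h
    have h3 : (W t t) ^ E.card = p ^ E.card := by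
      have := mul_left_cancel₀ hfac h
      exact this
    exact (pow_left_inj₀ (hWm t t).1 hp0.le hEne).mp h3
  intro x hx y hy
  set c := W x y with hc
  -- choose an edge
  obtain ⟨e0, he0⟩ := Finset.card_pos.mp (by omega : 0 < E.card)
  have he0' : e0.1 < e0.2 ∧ F.Adj e0.1 e0.2 := by
    have := he0; rw [hE, Finset.mem_filter] at this; exact this.2
  -- the test point
  set z : Fin k → ℝ := fun i => if i = e0.1 then y else x with hz
  have hzmem : ∀ i, z i ∈ Set.Icc (0 : ℝ) 1 := by
    intro i; rw [hz]; dsimp only; split <;> assumption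
  have hzfac : ∀ a b : Fin k, W (z a) (z b) = p ∨ W (z a) (z b) = c := by
    intro a b
    rw [hz]; dsimp only
    split <;> split
    · left; exact hdiag y hy
    · right; exact hWs y x
    · right; rfl
    · left; exact hdiag x hx
  have hznn : ∀ a b : Fin k, 0 ≤ W (z a) (z b) := fun a b => (hWm _ _).1
  have hmain := hsum z hzmem
  -- the value at the identity permutation
  have hid : psi F W (z ∘ (1 : Equiv.Perm (Fin k)))
      = c * ∏ e ∈ E.erase e0, W (z e.1) (z e.2) := by
    rw [show z ∘ ⇑(1 : Equiv.Perm (Fin k)) = z from rfl, hpsi,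
      ← Finset.mul_prod_erase E _ he0]
    congr 1
    have h1 : z e0.1 = y := by rw [hz]; simp
    have h2 : z e0.2 = x := by
      rw [hz]; dsimp only
      rw [if_neg he0'.1.ne']
    rw [h1, h2, hWs]
  have hcardE : E.card = (E.erase e0).card + 1 := by
    rw [Finset.card_erase_of_mem he0]; omega
  rcases lt_trichotomy c p with hcp | hcp | hcp
  · -- c < p : sum is strictly less than k! * p^E.card
    have hub : ∀ σ : Equiv.Perm (Fin k), psi F W (z ∘ σ) ≤ p ^ E.card := by
      intro σ
      rw [hpsi, ← Finset.prod_const]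
      refine Finset.prod_le_prod (fun e _ => hznn _ _) (fun e _ => ?_)
      simp only [Function.comp_apply]
      rcases hzfac (σ e.1) (σ e.2) with h | h <;> rw [h]
      exact le_of_lt hcp
    have hstrict : psi F W (z ∘ (1 : Equiv.Perm (Fin k))) < p ^ E.card := by
      rw [hid]
      have hR : ∏ e ∈ E.erase e0, W (z e.1) (z e.2) ≤ p ^ (E.erase e0).card := by
        rw [← Finset.prod_const]
        refine Finset.prod_le_prod (fun e _ => hznn _ _) (fun e _ => ?_)
        rcases hzfac e.1 e.2 with h | h <;> rw [h]
        exact le_of_lt hcp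
      calc c * ∏ e ∈ E.erase e0, W (z e.1) (z e.2)
          ≤ c * p ^ (E.erase e0).card := by
            exact mul_le_mul_of_nonneg_left hR (hWm x y).1
        _ < p * p ^ (E.erase e0).card :=
            mul_lt_mul_of_pos_right hcp (pow_pos hp0 _)
        _ = p ^ E.card := by rw [hcardE, pow_succ]; ring
    have : ∑ σ : Equiv.Perm (Fin k), psi F W (z ∘ σ)
        < ∑ _σ : Equiv.Perm (Fin k), p ^ E.card :=
      Finset.sum_lt_sum (fun σ _ => hub σ) ⟨1, Finset.mem_univ _, hstrict⟩
    rw [Finset.sum_const, Finset.card_univ, Fintype.card_perm, Fintype.card_fin,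
      nsmul_eq_mul, hmain] at this
    exact absurd this (lt_irrefl _)
  · exact hcp
  · -- c > p
    have hlb : ∀ σ : Equiv.Perm (Fin k), p ^ E.card ≤ psi F W (z ∘ σ) := by
      intro σ
      rw [hpsi, ← Finset.prod_const]
      refine Finset.prod_le_prod (fun e _ => hp0.le) (fun e _ => ?_)
      simp only [Function.comp_apply]
      rcases hzfac (σ e.1) (σ e.2) with h | h <;> rw [h]
      exact le_of_lt hcp
    have hstrict : p ^ E.card < psi F W (z ∘ (1 : Equiv.Perm (Fin k))) := by
      rw [hid]
      have hR : p ^ (E.erase e0).card ≤ ∏ e ∈ E.erase e0, W (z e.1) (z e.2) := by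
        rw [← Finset.prod_const]
        refine Finset.prod_le_prod (fun e _ => hp0.le) (fun e _ => ?_)
        rcases hzfac e.1 e.2 with h | h <;> rw [h]
        exact le_of_lt hcp
      calc p ^ E.card = p * p ^ (E.erase e0).card := by rw [hcardE, pow_succ]; ring
        _ < c * p ^ (E.erase e0).card :=
            mul_lt_mul_of_pos_right hcp (pow_pos hp0 _)
        _ ≤ c * ∏ e ∈ E.erase e0, W (z e.1) (z e.2) :=
            mul_le_mul_of_nonneg_left hR (le_trans hp0.le hcp.le)
    have : ∑ _σ : Equiv.Perm (Fin k), p ^ E.card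
        < ∑ σ : Equiv.Perm (Fin k), psi F W (z ∘ σ) :=
      Finset.sum_lt_sum (fun σ _ => hlb σ) ⟨1, Finset.mem_univ _, hstrict⟩
    rw [Finset.sum_const, Finset.card_univ, Fintype.card_perm, Fintype.card_fin,
      nsmul_eq_mul, hmain] at this
    exact absurd this (lt_irrefl _)
end

section
/- Let F be a finite simple graph with vertex set {1,…,k}, k > 1, let p ∈ (0,1), and let W be a graphon. If Ψ^{ind}_{F,W}(x₁,…,x_k) = p^{e(F)}·(1−p)^{C(k,2)−e(F)} for every (x₁,…,x_k) ∈ [0,1]^k, then W is a constant function, and its constant value q satisfies q^{e(F)}·(1−q)^{C(k,2)−e(F)} = p^{e(F)}·(1−p)^{C(k,2)−e(F)}. -/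
open MeasureTheory

open scoped Classical in
/-- `Ψ^{ind}_{F,W}(x₁,…,x_k) = ∏_{ij ∈ E(F)} W(x_i,x_j) ∏_{ij ∉ E(F), i<j} (1 − W(x_i,x_j))`. -/
noncomputable def psiInd {k : ℕ} (F : SimpleGraph (Fin k)) (W : ℝ → ℝ → ℝ)
    (x : Fin k → ℝ) : ℝ :=
  (∏ e ∈ Finset.univ.filter (fun e : Fin k × Fin k => e.1 < e.2 ∧ F.Adj e.1 e.2),
      W (x e.1) (x e.2)) *
    ∏ e ∈ Finset.univ.filter (fun e : Fin k × Fin k => e.1 < e.2 ∧ ¬F.Adj e.1 e.2),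
      (1 - W (x e.1) (x e.2))

private lemma pow_eq_pow_nonneg {a b : ℝ} {n : ℕ} (hn : n ≠ 0) (ha : 0 ≤ a) (hb : 0 ≤ b)
    (h : a ^ n = b ^ n) : a = b := by
  rcases lt_trichotomy a b with h' | h' | h'
  · exact absurd h (ne_of_lt (pow_lt_pow_left₀ h' ha hn))
  · exact h'
  · exact absurd h.symm (ne_of_lt (pow_lt_pow_left₀ h' hb hn))

private lemma card_lt_pairs (k : ℕ) :
    (Finset.univ.filter fun e : Fin k × Fin k => e.1 < e.2).card = k.choose 2 := by
  classical
  have hswap : (Finset.univ.filter fun e : Fin k × Fin k => e.1 < e.2).card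
      = (Finset.univ.filter fun e : Fin k × Fin k => e.2 < e.1).card := by
    apply Finset.card_nbij (i := Prod.swap)
    · intro a ha
      simpa using ha
    · intro a _ b _ hab; exact Prod.swap_injective hab
    · intro b hb
      refine ⟨b.swap, ?_, Prod.swap_swap b⟩
      simp only [Finset.coe_filter, Set.mem_setOf_eq, Finset.mem_univ, true_and] at hb ⊢
      simpa using hb
  have hdisj : Disjoint (Finset.univ.filter fun e : Fin k × Fin k => e.1 < e.2)
      (Finset.univ.filter fun e : Fin k × Fin k => e.2 < e.1) := by
    rw [Finset.disjoint_filter]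
    intro e _ h1 h2
    exact absurd h2 (not_lt.mpr h1.le)
  have hunion : (Finset.univ.filter fun e : Fin k × Fin k => e.1 < e.2).card
      + (Finset.univ.filter fun e : Fin k × Fin k => e.2 < e.1).card = k * k - k := by
    rw [← Finset.card_union_of_disjoint hdisj, ← Finset.filter_or]
    have : (Finset.univ.filter fun e : Fin k × Fin k => e.1 < e.2 ∨ e.2 < e.1)
        = (Finset.univ : Finset (Fin k)).offDiag := by
      ext e
      simp only [Finset.mem_filter, Finset.mem_univ, true_and, Finset.mem_offDiag]
      constructor
      · rintro (h | h) <;> intro heq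
        · exact absurd heq (ne_of_lt h)
        · exact absurd heq.symm (ne_of_lt h)
      · intro h
        exact lt_or_gt_of_ne h
    rw [this, Finset.offDiag_card, Finset.card_univ, Fintype.card_fin]
  have hmul : k * (k - 1) = k * k - k := by
    cases k with
    | zero => simp
    | succ n =>
      have h : (n+1)*(n+1) = (n+1)*n + (n+1) := by ring
      rw [Nat.succ_sub_one, h, Nat.add_sub_cancel]
  rw [Nat.choose_two_right]
  omega

open scoped Classical in
private noncomputable def bas {k : ℕ} (F : SimpleGraph (Fin k)) (i0 : Fin k) (v w : ℝ) :
    Fin k → ℝ :=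
  fun j => if F.Adj i0 j then v else w

open scoped Classical in
private noncomputable def cfg {k : ℕ} (F : SimpleGraph (Fin k)) (i0 : Fin k) (u v w : ℝ) :
    Fin k → ℝ :=
  fun j => if j = i0 then u else if F.Adj i0 j then v else w

/-- **Lemma.** Let `F` be a graph on `{1,…,k}` with `k > 1`, let `p ∈ (0,1)` and let
`W` be a graphon. If `Ψ^{ind}_{F,W} = p^{e(F)} (1−p)^{C(k,2)−e(F)}` everywhere on
`[0,1]^k`, then `W` is constant on `[0,1]²`, its value `q` satisfying
`q^{e(F)} (1−q)^{C(k,2)−e(F)} = p^{e(F)} (1−p)^{C(k,2)−e(F)}`. -/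
theorem stmt18 (k : ℕ) (hk : 1 < k) (F : SimpleGraph (Fin k))
    (p : ℝ) (hp0 : 0 < p) (hp1 : p < 1)
    (W : ℝ → ℝ → ℝ) (hW : IsGraphon W)
    (hpt : ∀ x : Fin k → ℝ, (∀ i, x i ∈ Set.Icc (0 : ℝ) 1) →
      psiInd F W x = p ^ edgeCount F * (1 - p) ^ (k.choose 2 - edgeCount F)) :
    ∃ q : ℝ, (∀ x ∈ Set.Icc (0 : ℝ) 1, ∀ y ∈ Set.Icc (0 : ℝ) 1, W x y = q) ∧
      q ^ edgeCount F * (1 - q) ^ (k.choose 2 - edgeCount F)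
        = p ^ edgeCount F * (1 - p) ^ (k.choose 2 - edgeCount F) := by
  classical
  obtain ⟨hmeas, hsymm, hmem⟩ := hW
  have h0I : (0:ℝ) ∈ Set.Icc (0:ℝ) 1 := Set.mem_Icc.mpr ⟨le_refl 0, zero_le_one⟩
  set i0 : Fin k := ⟨0, by omega⟩ with hi0
  have hvali0 : (i0 : Fin k).val = 0 := by rw [hi0]
  set c := p ^ edgeCount F * (1 - p) ^ (k.choose 2 - edgeCount F) with hc_def
  have hc : c ≠ 0 := ne_of_gt (mul_pos (pow_pos hp0 _) (pow_pos (by linarith) _))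
  set d := (Finset.univ.filter fun e : Fin k × Fin k =>
      (e.1 < e.2 ∧ F.Adj e.1 e.2) ∧ e.1 = i0).card with hd_def
  set d' := (Finset.univ.filter fun e : Fin k × Fin k =>
      (e.1 < e.2 ∧ ¬F.Adj e.1 e.2) ∧ e.1 = i0).card with hd'_def
  -- membership of the configuration in the cube
  have hcfg_mem : ∀ u v w : ℝ, u ∈ Set.Icc (0:ℝ) 1 → v ∈ Set.Icc (0:ℝ) 1 →
      w ∈ Set.Icc (0:ℝ) 1 → ∀ j, cfg F i0 u v w j ∈ Set.Icc (0:ℝ) 1 := by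
    intro u v w hu hv hw j
    unfold cfg
    split_ifs <;> assumption
  -- second coordinate facts
  have hne2a : ∀ e : Fin k × Fin k, e.1 < e.2 → e.1 = i0 → e.2 ≠ i0 := by
    intro e hlt h0 h2
    rw [h0, h2] at hlt
    exact lt_irrefl _ hlt
  have hne2b : ∀ e : Fin k × Fin k, e.1 < e.2 → e.2 ≠ i0 := by
    intro e hlt h2
    rw [h2, Fin.lt_def, hvali0] at hlt
    exact Nat.not_lt_zero _ hlt
  -- the factorization of psiInd over the configuration
  have hfac : ∀ u v w : ℝ, psiInd F W (cfg F i0 u v w)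
      = (W u v ^ d * (1 - W u w) ^ d') *
        ((∏ e ∈ Finset.univ.filter (fun e : Fin k × Fin k =>
              (e.1 < e.2 ∧ F.Adj e.1 e.2) ∧ ¬e.1 = i0),
            W (bas F i0 v w e.1) (bas F i0 v w e.2)) *
          ∏ e ∈ Finset.univ.filter (fun e : Fin k × Fin k =>
              (e.1 < e.2 ∧ ¬F.Adj e.1 e.2) ∧ ¬e.1 = i0),
            (1 - W (bas F i0 v w e.1) (bas F i0 v w e.2))) := by
    intro u v w
    have hsetA : Finset.univ.filter (fun e : Fin k × Fin k => e.1 < e.2 ∧ F.Adj e.1 e.2)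
        = (Finset.univ.filter (fun e : Fin k × Fin k =>
            (e.1 < e.2 ∧ F.Adj e.1 e.2) ∧ e.1 = i0)) ∪
          (Finset.univ.filter (fun e : Fin k × Fin k =>
            (e.1 < e.2 ∧ F.Adj e.1 e.2) ∧ ¬e.1 = i0)) := by
      ext e
      simp only [Finset.mem_filter, Finset.mem_union, Finset.mem_univ, true_and]
      tauto
    have hsetN : Finset.univ.filter (fun e : Fin k × Fin k => e.1 < e.2 ∧ ¬F.Adj e.1 e.2)
        = (Finset.univ.filter (fun e : Fin k × Fin k =>
            (e.1 < e.2 ∧ ¬F.Adj e.1 e.2) ∧ e.1 = i0)) ∪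
          (Finset.univ.filter (fun e : Fin k × Fin k =>
            (e.1 < e.2 ∧ ¬F.Adj e.1 e.2) ∧ ¬e.1 = i0)) := by
      ext e
      simp only [Finset.mem_filter, Finset.mem_union, Finset.mem_univ, true_and]
      tauto
    have hdA : Disjoint (Finset.univ.filter (fun e : Fin k × Fin k =>
            (e.1 < e.2 ∧ F.Adj e.1 e.2) ∧ e.1 = i0))
          (Finset.univ.filter (fun e : Fin k × Fin k =>
            (e.1 < e.2 ∧ F.Adj e.1 e.2) ∧ ¬e.1 = i0)) := by
      rw [Finset.disjoint_filter]
      tauto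
    have hdN : Disjoint (Finset.univ.filter (fun e : Fin k × Fin k =>
            (e.1 < e.2 ∧ ¬F.Adj e.1 e.2) ∧ e.1 = i0))
          (Finset.univ.filter (fun e : Fin k × Fin k =>
            (e.1 < e.2 ∧ ¬F.Adj e.1 e.2) ∧ ¬e.1 = i0)) := by
      rw [Finset.disjoint_filter]
      tauto
    have e1 : ∀ e ∈ Finset.univ.filter (fun e : Fin k × Fin k =>
        (e.1 < e.2 ∧ F.Adj e.1 e.2) ∧ e.1 = i0),
        W (cfg F i0 u v w e.1) (cfg F i0 u v w e.2) = W u v := by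
      intro e he
      simp only [Finset.mem_filter, Finset.mem_univ, true_and] at he
      obtain ⟨⟨hlt, hadj⟩, h0⟩ := he
      have h2 : e.2 ≠ i0 := hne2a e hlt h0
      have ha : F.Adj i0 e.2 := h0 ▸ hadj
      simp [cfg, h0, h2, ha]
    have e2 : ∀ e ∈ Finset.univ.filter (fun e : Fin k × Fin k =>
        (e.1 < e.2 ∧ ¬F.Adj e.1 e.2) ∧ e.1 = i0),
        (1 - W (cfg F i0 u v w e.1) (cfg F i0 u v w e.2)) = 1 - W u w := by
      intro e he
      simp only [Finset.mem_filter, Finset.mem_univ, true_and] at he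
      obtain ⟨⟨hlt, hadj⟩, h0⟩ := he
      have h2 : e.2 ≠ i0 := hne2a e hlt h0
      have ha : ¬F.Adj i0 e.2 := h0 ▸ hadj
      simp [cfg, h0, h2, ha]
    have e3 : ∀ e ∈ Finset.univ.filter (fun e : Fin k × Fin k =>
        (e.1 < e.2 ∧ F.Adj e.1 e.2) ∧ ¬e.1 = i0),
        W (cfg F i0 u v w e.1) (cfg F i0 u v w e.2)
          = W (bas F i0 v w e.1) (bas F i0 v w e.2) := by
      intro e he
      simp only [Finset.mem_filter, Finset.mem_univ, true_and] at he
      obtain ⟨⟨hlt, _⟩, h1⟩ := he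
      have h2 : e.2 ≠ i0 := hne2b e hlt
      simp [cfg, bas, h1, h2]
    have e4 : ∀ e ∈ Finset.univ.filter (fun e : Fin k × Fin k =>
        (e.1 < e.2 ∧ ¬F.Adj e.1 e.2) ∧ ¬e.1 = i0),
        (1 - W (cfg F i0 u v w e.1) (cfg F i0 u v w e.2))
          = 1 - W (bas F i0 v w e.1) (bas F i0 v w e.2) := by
      intro e he
      simp only [Finset.mem_filter, Finset.mem_univ, true_and] at he
      obtain ⟨⟨hlt, _⟩, h1⟩ := he
      have h2 : e.2 ≠ i0 := hne2b e hlt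
      simp [cfg, bas, h1, h2]
    rw [psiInd, hsetA, hsetN, Finset.prod_union hdA, Finset.prod_union hdN,
      Finset.prod_congr rfl e1, Finset.prod_congr rfl e2, Finset.prod_congr rfl e3,
      Finset.prod_congr rfl e4, Finset.prod_const, Finset.prod_const, ← hd_def, ← hd'_def]
    ring
  -- the key identity
  have hkey : ∀ v ∈ Set.Icc (0:ℝ) 1, ∀ w ∈ Set.Icc (0:ℝ) 1, ∀ u ∈ Set.Icc (0:ℝ) 1,
      W u v ^ d * (1 - W u w) ^ d' = W 0 v ^ d * (1 - W 0 w) ^ d' := by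
    intro v hv w hw u hu
    have h1 := hpt (cfg F i0 u v w) (hcfg_mem u v w hu hv hw)
    have h2 := hpt (cfg F i0 0 v w) (hcfg_mem 0 v w h0I hv hw)
    rw [hfac] at h1 h2
    exact mul_right_cancel₀ (right_ne_zero_of_mul (h1.trans_ne hc)) (h1.trans h2.symm)
  have hne0 : ∀ u ∈ Set.Icc (0:ℝ) 1, ∀ v ∈ Set.Icc (0:ℝ) 1, ∀ w ∈ Set.Icc (0:ℝ) 1,
      W u v ^ d * (1 - W u w) ^ d' ≠ 0 := by
    intro u hu v hv w hw
    have h1 := hpt (cfg F i0 u v w) (hcfg_mem u v w hu hv hw)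
    rw [hfac] at h1
    exact left_ne_zero_of_mul (h1.trans_ne hc)
  -- d and d' are not both zero
  have hd_or : ¬(d = 0 ∧ d' = 0) := by
    rintro ⟨h1, h2⟩
    have hlt01 : i0 < (⟨1, hk⟩ : Fin k) := by
      rw [Fin.lt_def, hvali0]
      exact Nat.zero_lt_one
    rw [hd_def, Finset.card_eq_zero] at h1
    rw [hd'_def, Finset.card_eq_zero] at h2
    by_cases hA : F.Adj i0 ⟨1, hk⟩
    · have hmem' : ((i0, ⟨1, hk⟩) : Fin k × Fin k) ∈ Finset.univ.filter
          (fun e : Fin k × Fin k => (e.1 < e.2 ∧ F.Adj e.1 e.2) ∧ e.1 = i0) := by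
        simp [hlt01, hA]
      rw [h1] at hmem'
      exact absurd hmem' (Finset.notMem_empty _)
    · have hmem' : ((i0, ⟨1, hk⟩) : Fin k × Fin k) ∈ Finset.univ.filter
          (fun e : Fin k × Fin k => (e.1 < e.2 ∧ ¬F.Adj e.1 e.2) ∧ e.1 = i0) := by
        simp [hlt01, hA]
      rw [h2] at hmem'
      exact absurd hmem' (Finset.notMem_empty _)
  -- W is constant in its first argument
  have hconst : ∀ u ∈ Set.Icc (0:ℝ) 1, ∀ v ∈ Set.Icc (0:ℝ) 1, W u v = W 0 v := by
    rcases Nat.eq_zero_or_pos d with hd0 | hdpos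
    · have hd' : d' ≠ 0 := fun h => hd_or ⟨hd0, h⟩
      intro u hu v hv
      have h := hkey 0 h0I v hv u hu
      simp only [hd0, pow_zero, one_mul] at h
      have h2 := pow_eq_pow_nonneg hd' (by linarith [(hmem u v).2]) (by linarith [(hmem 0 v).2]) h
      linarith
    rcases Nat.eq_zero_or_pos d' with hd'0 | hd'pos
    · have hd : d ≠ 0 := fun h => hd_or ⟨h, hd'0⟩
      intro u hu v hv
      have h := hkey v hv 0 h0I u hu
      simp only [hd'0, pow_zero, mul_one] at h
      exact pow_eq_pow_nonneg hd (hmem u v).1 (hmem 0 v).1 h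
    · have hd : d ≠ 0 := hdpos.ne'
      have hd' : d' ≠ 0 := hd'pos.ne'
      have hposW : ∀ a ∈ Set.Icc (0:ℝ) 1, ∀ b ∈ Set.Icc (0:ℝ) 1, 0 < W a b := by
        intro a ha b hb
        rcases (hmem a b).1.lt_or_eq with h | h
        · exact h
        · exact absurd (by rw [← h, zero_pow hd, zero_mul]) (hne0 a ha b hb b hb)
      have hlt1W : ∀ a ∈ Set.Icc (0:ℝ) 1, ∀ b ∈ Set.Icc (0:ℝ) 1, W a b < 1 := by
        intro a ha b hb
        rcases (hmem a b).2.lt_or_eq with h | h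
        · exact h
        · exact absurd (by rw [h, sub_self, zero_pow hd', mul_zero]) (hne0 a ha b hb b hb)
      have star : ∀ u ∈ Set.Icc (0:ℝ) 1, ∀ v ∈ Set.Icc (0:ℝ) 1,
          W u v * W 0 0 = W 0 v * W u 0 := by
        intro u hu v hv
        have E1 := hkey v hv 0 h0I u hu
        have E2 := hkey 0 h0I 0 h0I u hu
        have hb : (1 - W u 0) ^ d' ≠ 0 :=
          pow_ne_zero _ (by have := hlt1W u hu 0 h0I; intro h'; linarith [sub_eq_zero.mp h'])
        have hd1 : (1 - W 0 0) ^ d' ≠ 0 :=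
          pow_ne_zero _ (by have := hlt1W 0 h0I 0 h0I; intro h'; linarith [sub_eq_zero.mp h'])
        have h3 : W u v ^ d * W 0 0 ^ d * ((1 - W u 0) ^ d' * (1 - W 0 0) ^ d')
            = W 0 v ^ d * W u 0 ^ d * ((1 - W u 0) ^ d' * (1 - W 0 0) ^ d') := by
          linear_combination (W 0 0 ^ d * (1 - W 0 0) ^ d') * E1
            - (W 0 v ^ d * (1 - W 0 0) ^ d') * E2
        have h4 : (W u v * W 0 0) ^ d = (W 0 v * W u 0) ^ d := by
          rw [mul_pow, mul_pow]
          exact mul_right_cancel₀ (mul_ne_zero hb hd1) h3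
        exact pow_eq_pow_nonneg hd
          (mul_nonneg (hmem u v).1 (hmem 0 0).1)
          (mul_nonneg (hmem 0 v).1 (hmem u 0).1) h4
      have star2 : ∀ u ∈ Set.Icc (0:ℝ) 1, ∀ w ∈ Set.Icc (0:ℝ) 1,
          (1 - W u w) * (1 - W 0 0) = (1 - W 0 w) * (1 - W u 0) := by
        intro u hu w hw
        have E1 := hkey 0 h0I w hw u hu
        have E2 := hkey 0 h0I 0 h0I u hu
        have ha2 : W u 0 ^ d ≠ 0 := pow_ne_zero _ (ne_of_gt (hposW u hu 0 h0I))
        have hc2 : W 0 0 ^ d ≠ 0 := pow_ne_zero _ (ne_of_gt (hposW 0 h0I 0 h0I))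
        have h3 : W u 0 ^ d * W 0 0 ^ d * ((1 - W u w) ^ d' * (1 - W 0 0) ^ d')
            = W u 0 ^ d * W 0 0 ^ d * ((1 - W 0 w) ^ d' * (1 - W u 0) ^ d') := by
          linear_combination (W 0 0 ^ d * (1 - W 0 0) ^ d') * E1
            - (W 0 0 ^ d * (1 - W 0 w) ^ d') * E2
        have h4 : ((1 - W u w) * (1 - W 0 0)) ^ d' = ((1 - W 0 w) * (1 - W u 0)) ^ d' := by
          rw [mul_pow, mul_pow]
          exact mul_left_cancel₀ (mul_ne_zero ha2 hc2) h3
        exact pow_eq_pow_nonneg hd'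
          (mul_nonneg (by linarith [(hmem u w).2]) (by linarith [(hmem 0 0).2]))
          (mul_nonneg (by linarith [(hmem 0 w).2]) (by linarith [(hmem u 0).2])) h4
      have hdiag : ∀ u ∈ Set.Icc (0:ℝ) 1, W u 0 = W 0 0 := by
        intro u hu
        have h1 := star u hu u hu
        rw [hsymm 0 u] at h1
        have h2 := star2 u hu u hu
        rw [hsymm 0 u] at h2
        have hsq : (W u 0 - W 0 0) ^ 2 = 0 := by
          linear_combination (W 0 0 - 1) * h1 - W 0 0 * h2
        have := pow_eq_zero_iff (two_ne_zero) |>.mp hsq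
        linarith [sub_eq_zero.mp this]
      intro u hu v hv
      have h1 := star u hu v hv
      rw [hdiag u hu] at h1
      exact mul_right_cancel₀ (ne_of_gt (hposW 0 h0I 0 h0I)) h1
  refine ⟨W 0 0, ?_, ?_⟩
  · intro x hx y hy
    rw [hconst x hx y hy, hsymm 0 y, hconst y hy 0 h0I]
  · have hx0 := hpt (fun _ => (0:ℝ)) (fun _ => h0I)
    have hA : psiInd F W (fun _ => (0:ℝ))
        = W 0 0 ^ (Finset.univ.filter fun e : Fin k × Fin k =>
              e.1 < e.2 ∧ F.Adj e.1 e.2).card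
          * (1 - W 0 0) ^ (Finset.univ.filter fun e : Fin k × Fin k =>
              e.1 < e.2 ∧ ¬F.Adj e.1 e.2).card := by
      rw [psiInd, Finset.prod_const, Finset.prod_const]
    have hcard1 : (Finset.univ.filter fun e : Fin k × Fin k =>
        e.1 < e.2 ∧ F.Adj e.1 e.2).card = edgeCount F := by
      rw [edgeCount, ← Set.ncard_coe_finset]
      congr 1
      ext e
      simp
    have hcard2 : (Finset.univ.filter fun e : Fin k × Fin k =>
        e.1 < e.2 ∧ ¬F.Adj e.1 e.2).card = k.choose 2 - edgeCount F := by
      have hsum : (Finset.univ.filter fun e : Fin k × Fin k =>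
            e.1 < e.2 ∧ F.Adj e.1 e.2).card
          + (Finset.univ.filter fun e : Fin k × Fin k =>
            e.1 < e.2 ∧ ¬F.Adj e.1 e.2).card
          = (Finset.univ.filter fun e : Fin k × Fin k => e.1 < e.2).card := by
        rw [← Finset.card_union_of_disjoint (by rw [Finset.disjoint_filter]; tauto),
          ← Finset.filter_or]
        congr 1
        ext e
        simp only [Finset.mem_filter, Finset.mem_univ, true_and]
        tauto
      rw [card_lt_pairs, hcard1] at hsum
      omega
    rw [hA, hcard1, hcard2] at hx0
    exact hx0
end
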